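/- arXiv:1907.01745 — 10 statements merged into one kernel-verified Lean document; each statement's English description precedes it below -/
import Mathlib

section
/- Let I = {1,...,n} be a finite set of items with positive rational sizes s_i, let M = {1,...,m} be a set of m unit-capacity bins, and let p_{i,j} ≥ 0 be the profit of assigning item i to bin j. For S ⊆ I let φ(S) denote the optimal value of the linear program LP(S): maximize Σ_{i∈I, j∈M} x_{i,j}·p_{i,j} subject to Σ_{j∈M} x_{i,j} ≤ 1 for every i ∈ I, Σ_{i∈I} x_{i,j}·s_i ≤ 1 for every j ∈ M, x_{i,j} = 0 for every i ∈ I\S and j ∈ M, and x_{i,j} ≥ 0 for all i, j. Then φ is submodular, i.e., φ(S) + φ(T) ≥ φ(S ∪ T) + φ(S ∩ T) for all S, T ⊆ I; moreover φ is monotone (S ⊆ T implies φ(S) ≤ φ(T)) and non-negative. -/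
/-!
By LP duality (obtained from Hahn–Banach separation), `φ S` is the least value
`∑ i ∈ S, u i + ∑ j, v j` of a dual solution: `u, v ≥ 0` with `p i j ≤ u i + s i * v j` for
`i ∈ S`. Dual solutions `(u, v)` for `S` and `(u', v')` for `T` yield dual solutions for `S ∪ T`
(`u ⊓ u'` on `S ∩ T`, `u` resp. `u'` elsewhere, and `v ⊔ v'`) and for `S ∩ T` (`u ⊔ u'` and
`v ⊓ v'`); since `min + max = sum`, their values add up to those of `(u, v)` and `(u', v')`.
-/

section

open Set Filter Topology Pointwise

lemma nonpos_of_forall_pos_add_mul_lt {a b C : ℝ} (h : ∀ t : ℝ, 0 < t → b + t * a < C) :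
    a ≤ 0 := by
  by_contra! ha
  have := h ((|C - b| + 1) / a) (by positivity)
  rw [div_mul_cancel₀ _ ha.ne'] at this
  linarith [le_abs_self (C - b)]

lemma le_of_forall_pos_add_mul_lt {a b C : ℝ} (h : ∀ t : ℝ, 0 < t → b + t * a < C) :
    b ≤ C := by
  have hlim : Tendsto (fun t : ℝ => b + t * a) (𝓝[>] 0) (𝓝 b) :=
    tendsto_nhdsWithin_of_tendsto_nhds <|
      (by fun_prop : Continuous fun t : ℝ => b + t * a).tendsto' 0 b (by simp)
  exact le_of_tendsto hlim (eventually_nhdsWithin_of_forall fun t ht => (h t ht).le)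

variable {X ι : Type*} [AddCommGroup X] [Module ℝ X] [Fintype ι] (K : PointedCone ℝ X)
  (A : X →ₗ[ℝ] ι → ℝ) (c : X →ₗ[ℝ] ℝ) {b : ι → ℝ} {Φ : ℝ}

theorem PointedCone.exists_separating_of_forall_le (hΦ : ∀ x ∈ K, A x ≤ b → c x ≤ Φ) :
    ∃ (ℓ : (ι → ℝ) →ₗ[ℝ] ℝ) (κ : ℝ), ∀ x ∈ K, ∀ r t, (∀ i, 0 < r i) → t < 0 →
      ℓ (A x + r) + (c x + t) * κ < ℓ b + Φ * κ := by
  set O : Set ((ι → ℝ) × ℝ) := (univ.pi fun _ => Ioi 0) ×ˢ Iio 0 with hO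
  have hO_mem : ∀ r t, (r, t) ∈ O ↔ (∀ i, 0 < r i) ∧ t < 0 := by simp [hO]
  set U := (A.prod c) '' K + O
  have hU_open : IsOpen U :=
    ((isOpen_set_pi finite_univ fun _ _ => isOpen_Ioi).prod isOpen_Iio).add_left
  have hU_conv : Convex ℝ U :=
    (K.convex.linear_image _).add ((convex_pi fun _ _ => convex_Ioi 0).prod (convex_Iio 0))
  have hbΦ : (b, Φ) ∉ U := by
    rintro ⟨_, ⟨x, hx, rfl⟩, ⟨r, t⟩, hrt, hsum⟩
    obtain ⟨hr, ht⟩ := (hO_mem r t).1 hrt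
    obtain ⟨hsum₁, hsum₂⟩ := Prod.ext_iff.1 hsum
    simp only [Prod.fst_add, Prod.snd_add, LinearMap.prod_apply, Function.prod] at hsum₁ hsum₂
    have := hΦ x hx fun i => by linarith [congrFun hsum₁ i, hr i, Pi.add_apply (A x) r i]
    linarith
  obtain ⟨L, hL⟩ := geometric_hahn_banach_open_point hU_conv hU_open hbΦ
  refine ⟨L.toLinearMap.comp (LinearMap.inl ℝ _ ℝ), L (0, 1), fun x hx r t hr ht => ?_⟩
  have hL_apply : ∀ r t, L (r, t) = L (r, 0) + t * L (0, 1) := fun r t => by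
    rw [← smul_eq_mul, ← map_smul, ← map_add, Prod.smul_mk, smul_zero, smul_eq_mul, mul_one,
      Prod.mk_add_mk, add_zero, zero_add]
  have := hL _ (add_mem_add (mem_image_of_mem (A.prod c) hx) ((hO_mem r t).2 ⟨hr, ht⟩))
  rw [LinearMap.prod_apply, Function.prod, Prod.mk_add_mk, hL_apply (A x + r), hL_apply b] at this
  exact this

theorem PointedCone.exists_lagrangian_lt (hb : ∀ i, 0 < b i)
    (hΦ : ∀ x ∈ K, A x ≤ b → c x ≤ Φ) :
    ∃ y : ι → ℝ, ∀ x ∈ K, ∀ r t, (∀ i, 0 < r i) → t < 0 →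
      c x + t + y ⬝ᵥ (b - (A x + r)) < Φ := by
  classical
  obtain ⟨ℓ, κ, hsep⟩ := K.exists_separating_of_forall_le A c hΦ
  have hΦ₀ : 0 ≤ Φ := by simpa using hΦ 0 K.zero_mem fun i => by simpa using (hb i).le
  -- Slater's condition: `x = 0` is strictly feasible, which makes `κ` positive.
  have hκ : 0 < κ := by
    have := hsep 0 K.zero_mem b (-1) hb (by norm_num)
    simp only [map_zero, zero_add] at this
    nlinarith
  set y : ι → ℝ := fun i => -ℓ (Pi.single i 1) / κ
  have hy : ∀ w, y ⬝ᵥ w = -ℓ w / κ := fun w => by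
    have := LinearMap.congr_fun ((LinearEquiv.piRing ℝ ℝ ι ℝ).symm_apply_apply ℓ) w
    simp only [LinearEquiv.piRing_symm_apply, LinearEquiv.piRing_apply, smul_eq_mul] at this
    simp only [dotProduct, ← this, neg_div, ← Finset.sum_neg_distrib, Finset.sum_div]
    exact Finset.sum_congr rfl fun i _ => by ring
  refine ⟨y, fun x hx r t hr ht => ?_⟩
  have := hsep x hx r t hr ht
  calc c x + t + y ⬝ᵥ (b - (A x + r)) = ((c x + t) * κ + ℓ (A x + r) - ℓ b) / κ := by
        rw [hy, map_sub]; field_simp; ring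
    _ < Φ * κ / κ := by gcongr; linarith
    _ = Φ := by field_simp

theorem PointedCone.exists_dual_le_of_forall_le (hb : ∀ i, 0 < b i)
    (hΦ : ∀ x ∈ K, A x ≤ b → c x ≤ Φ) :
    ∃ y : ι → ℝ, 0 ≤ y ∧ (∀ x ∈ K, c x ≤ y ⬝ᵥ A x) ∧ y ⬝ᵥ b ≤ Φ := by
  classical
  obtain ⟨y, hy⟩ := K.exists_lagrangian_lt A c hb hΦ
  refine ⟨y, fun i => ?_, fun x hx => ?_, ?_⟩
  · have := nonpos_of_forall_pos_add_mul_lt (a := -y i) (b := -1) (C := Φ) fun t ht => by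
      have := hy 0 K.zero_mem (b + t • Pi.single i 1) (-1) (fun k => ?_) (by norm_num)
      · simpa [dotProduct_single] using this
      · have : (0 : ι → ℝ) ≤ t • Pi.single i 1 :=
          smul_nonneg ht.le (Pi.single_nonneg.2 zero_le_one)
        exact add_pos_of_pos_of_nonneg (hb k) (this k)
    simpa using this
  · have := nonpos_of_forall_pos_add_mul_lt (a := c x - y ⬝ᵥ A x) (b := y ⬝ᵥ b - 1 - y ⬝ᵥ 1)
      (C := Φ) fun t ht => by
        have := hy (t • x) (K.smul_mem ht.le hx) 1 (-1) (fun _ => one_pos) (by norm_num)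
        simp only [map_smul, dotProduct_sub, dotProduct_add, dotProduct_smul, smul_eq_mul] at this
        linarith
    linarith
  · exact le_of_forall_pos_add_mul_lt (a := -1 - y ⬝ᵥ 1) fun t ht => by
      have := hy 0 K.zero_mem (t • 1) (-t) (fun _ => by simpa using ht) (by linarith)
      simp only [map_zero, zero_add, dotProduct_sub, dotProduct_smul, smul_eq_mul] at this
      linarith

end

open Finset

variable {α β : Type*}

def gapCone (R : Finset α) : PointedCone ℝ (α → β → ℝ) where
  carrier := {x | (∀ i j, 0 ≤ x i j) ∧ ∀ i ∉ R, ∀ j, x i j = 0}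
  add_mem' hx hy := ⟨fun i j => add_nonneg (hx.1 i j) (hy.1 i j),
    fun i hi j => by simp [hx.2 i hi j, hy.2 i hi j]⟩
  zero_mem' := ⟨fun _ _ => le_rfl, fun _ _ _ => rfl⟩
  smul_mem' c _ hx :=
    ⟨fun i j => mul_nonneg c.2 (hx.1 i j), fun i hi j => by simp [hx.2 i hi j]⟩

@[simp]
theorem mem_gapCone {R : Finset α} {x : α → β → ℝ} :
    x ∈ gapCone R ↔ (∀ i j, 0 ≤ x i j) ∧ ∀ i ∉ R, ∀ j, x i j = 0 :=
  Iff.rfl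

structure IsGapDual (σ : α → ℝ) (p : α → β → ℝ) (R : Finset α) (u : α → ℝ)
    (v : β → ℝ) : Prop where
  nonneg_left : 0 ≤ u
  nonneg_right : 0 ≤ v
  le_add_mul : ∀ i ∈ R, ∀ j, p i j ≤ u i + σ i * v j

section Combine

variable [DecidableEq α] {σ : α → ℝ} {p : α → β → ℝ} {S T : Finset α} {u u' : α → ℝ}
  {v v' : β → ℝ}

def unionDual (S T : Finset α) (u u' : α → ℝ) : α → ℝ :=
  (S ∩ T).piecewise (u ⊓ u') (S.piecewise u u')

theorem IsGapDual.union (hS : IsGapDual σ p S u v) (hT : IsGapDual σ p T u' v')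
    (hσ : 0 ≤ σ) : IsGapDual σ p (S ∪ T) (unionDual S T u u') (v ⊔ v') := by
  refine ⟨fun i => ?_, fun j => le_sup_of_le_left (hS.nonneg_right j), fun i hi j => ?_⟩
  · simp only [unionDual, Finset.piecewise]
    split_ifs
    exacts [le_inf (hS.nonneg_left i) (hT.nonneg_left i), hS.nonneg_left i, hT.nonneg_left i]
  · have hv : σ i * v j ≤ σ i * (v ⊔ v') j := mul_le_mul_of_nonneg_left le_sup_left (hσ i)
    have hv' : σ i * v' j ≤ σ i * (v ⊔ v') j := mul_le_mul_of_nonneg_left le_sup_right (hσ i)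
    simp only [unionDual, Finset.piecewise, mem_inter]
    split_ifs with hST hiS
    · have : p i j - σ i * (v ⊔ v') j ≤ u i ⊓ u' i :=
        le_inf (by linarith [hS.le_add_mul i hST.1 j]) (by linarith [hT.le_add_mul i hST.2 j])
      simp only [Pi.inf_apply]
      linarith
    · linarith [hS.le_add_mul i hiS j]
    · linarith [hT.le_add_mul i ((mem_union.1 hi).resolve_left hiS) j]

theorem IsGapDual.inter (hS : IsGapDual σ p S u v) (hT : IsGapDual σ p T u' v') :
    IsGapDual σ p (S ∩ T) (u ⊔ u') (v ⊓ v') := by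
  refine ⟨fun i => le_sup_of_le_left (hS.nonneg_left i),
    fun j => le_inf (hS.nonneg_right j) (hT.nonneg_right j), fun i hi j => ?_⟩
  rw [mem_inter] at hi
  simp only [Pi.inf_apply, Pi.sup_apply]
  rcases le_total (v j) (v' j) with h | h
  · rw [inf_of_le_left h]
    linarith [hS.le_add_mul i hi.1 j, le_sup_left (a := u i) (b := u' i)]
  · rw [inf_of_le_right h]
    linarith [hT.le_add_mul i hi.2 j, le_sup_right (a := u i) (b := u' i)]

theorem sum_unionDual_add_sum_sup (S T : Finset α) (u u' : α → ℝ) :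
    ∑ i ∈ S ∪ T, unionDual S T u u' i + ∑ i ∈ S ∩ T, (u ⊔ u') i =
      ∑ i ∈ S, u i + ∑ i ∈ T, u' i := by
  have h : ∀ (R : Finset α) (f : α → ℝ), R ⊆ S ∪ T →
      ∑ i ∈ R, f i = ∑ i ∈ S ∪ T, if i ∈ R then f i else 0 := fun R f hR => by
    rw [sum_ite_mem, inter_eq_right.2 hR]
  rw [h (S ∩ T) (u ⊔ u') inter_subset_union, h S u subset_union_left,
    h T u' subset_union_right, ← sum_add_distrib, ← sum_add_distrib]
  refine sum_congr rfl fun i hi => ?_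
  by_cases hS : i ∈ S <;> by_cases hT : i ∈ T <;>
    simp [unionDual, hS, hT, min_add_max] at hi ⊢

end Combine

variable [Fintype α] [Fintype β]

def IsGapFeasible (σ : α → ℝ) (R : Finset α) (x : α → β → ℝ) : Prop :=
  (∀ i j, 0 ≤ x i j) ∧ (∀ i, ∑ j, x i j ≤ 1) ∧ (∀ j, ∑ i, x i j * σ i ≤ 1) ∧
    ∀ i ∉ R, ∀ j, x i j = 0

theorem IsGapFeasible.mono {σ : α → ℝ} {R R' : Finset α} {x : α → β → ℝ}
    (hx : IsGapFeasible σ R x) (h : R ⊆ R') : IsGapFeasible σ R' x :=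
  ⟨hx.1, hx.2.1, hx.2.2.1, fun i hi => hx.2.2.2 i fun hiR => hi (h hiR)⟩

theorem isGapFeasible_zero (σ : α → ℝ) (R : Finset α) :
    IsGapFeasible σ R (0 : α → β → ℝ) :=
  ⟨fun _ _ => le_rfl, fun _ => by simp, fun _ => by simp, fun _ _ _ => rfl⟩

def gapLoad (σ : α → ℝ) : (α → β → ℝ) →ₗ[ℝ] (α ⊕ β → ℝ) where
  toFun x := Sum.elim (fun i => ∑ j, x i j) (fun j => ∑ i, x i j * σ i)
  map_add' x y := by ext (i | j) <;> simp [sum_add_distrib, add_mul]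
  map_smul' c x := by ext (i | j) <;> simp [mul_sum, mul_assoc]

def gapProfit (p : α → β → ℝ) : (α → β → ℝ) →ₗ[ℝ] ℝ where
  toFun x := ∑ i, ∑ j, x i j * p i j
  map_add' x y := by simp [sum_add_distrib, add_mul]
  map_smul' c x := by simp [mul_sum, mul_assoc]

@[simp]
theorem gapLoad_inl (σ : α → ℝ) (x : α → β → ℝ) (i : α) :
    gapLoad σ x (Sum.inl i) = ∑ j, x i j :=
  rfl

@[simp]
theorem gapLoad_inr (σ : α → ℝ) (x : α → β → ℝ) (j : β) :
    gapLoad σ x (Sum.inr j) = ∑ i, x i j * σ i :=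
  rfl

@[simp]
theorem gapProfit_apply (p : α → β → ℝ) (x : α → β → ℝ) :
    gapProfit p x = ∑ i, ∑ j, x i j * p i j :=
  rfl

theorem isGapFeasible_iff {σ : α → ℝ} {R : Finset α} {x : α → β → ℝ} :
    IsGapFeasible σ R x ↔ x ∈ gapCone R ∧ gapLoad σ x ≤ 1 := by
  simp only [IsGapFeasible, mem_gapCone, Pi.le_def, Sum.forall, gapLoad_inl, gapLoad_inr,
    Pi.one_apply]
  tauto

theorem IsGapDual.profit_le {σ : α → ℝ} {p : α → β → ℝ} {R : Finset α} {u : α → ℝ}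
    {v : β → ℝ} (hd : IsGapDual σ p R u v) {x : α → β → ℝ} (hx : IsGapFeasible σ R x) :
    ∑ i, ∑ j, x i j * p i j ≤ ∑ i ∈ R, u i + ∑ j, v j := by
  classical
  obtain ⟨hx₀, hrow, hcol, hR⟩ := hx
  calc ∑ i, ∑ j, x i j * p i j ≤ ∑ i, ∑ j, x i j * (u i + σ i * v j) := by
        refine sum_le_sum fun i _ => sum_le_sum fun j _ => ?_
        by_cases hi : i ∈ R
        · exact mul_le_mul_of_nonneg_left (hd.le_add_mul i hi j) (hx₀ i j)
        · simp [hR i hi j]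
    _ = ∑ i, u i * ∑ j, x i j + ∑ j, v j * ∑ i, x i j * σ i := by
        simp only [mul_add, sum_add_distrib, mul_sum]
        rw [sum_comm (f := fun i j => x i j * (σ i * v j))]
        congr 1 <;> exact sum_congr rfl fun _ _ => sum_congr rfl fun _ _ => by ring
    _ ≤ ∑ i, (if i ∈ R then u i else 0) + ∑ j, v j := by
        gcongr with i _ j
        · split_ifs with hi
          · exact mul_le_of_le_one_right (hd.nonneg_left i) (hrow i)
          · simp [hR i hi]
        · exact mul_le_of_le_one_right (hd.nonneg_right j) (hcol j)
    _ = ∑ i ∈ R, u i + ∑ j, v j := by rw [sum_ite_mem, univ_inter]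

theorem exists_isGapDual_le {σ : α → ℝ} {p : α → β → ℝ} {R : Finset α} {Φ : ℝ}
    (hΦ : ∀ x, IsGapFeasible σ R x → ∑ i, ∑ j, x i j * p i j ≤ Φ) :
    ∃ u v, IsGapDual σ p R u v ∧ ∑ i ∈ R, u i + ∑ j, v j ≤ Φ := by
  classical
  obtain ⟨y, hy₀, hy, hyΦ⟩ :=
    (gapCone R).exists_dual_le_of_forall_le (gapLoad σ) (gapProfit p) (fun _ => one_pos)
      fun x hx hAx => hΦ x (isGapFeasible_iff.2 ⟨hx, hAx⟩)
  refine ⟨fun i => y (Sum.inl i), fun j => y (Sum.inr j),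
    ⟨fun i => hy₀ _, fun j => hy₀ _, fun i hi j => ?_⟩, ?_⟩
  · have := hy (Pi.single i (Pi.single j 1)) ?_
    · simpa [dotProduct, Fintype.sum_sum_type, Pi.single_apply, ite_apply, mul_comm] using this
    · refine ⟨fun i' j' => ?_, fun i' hi' j' => ?_⟩
      · simp only [Pi.single_apply, ite_apply, Pi.zero_apply]
        split_ifs <;> norm_num
      · simp [show i' ≠ i from fun h => hi' (h ▸ hi)]
  · calc ∑ i ∈ R, y (Sum.inl i) + ∑ j, y (Sum.inr j)
        ≤ ∑ i, y (Sum.inl i) + ∑ j, y (Sum.inr j) := by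
          linarith [sum_le_univ_sum_of_nonneg (s := R) fun i => hy₀ (Sum.inl i)]
      _ ≤ Φ := by simpa [dotProduct, Fintype.sum_sum_type] using hyΦ

theorem phi_submodular_monotone_nonneg_general
    (n m : ℕ) (s : Fin n → ℚ) (hs : ∀ i, 0 < s i)
    (p : Fin n → Fin m → ℝ)
    (φ : Finset (Fin n) → ℝ)
    (hφ : ∀ S : Finset (Fin n), IsGreatest
      { v : ℝ | ∃ x : Fin n → Fin m → ℝ,
          (∀ i j, 0 ≤ x i j) ∧
          (∀ i, ∑ j, x i j ≤ 1) ∧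
          (∀ j, ∑ i, x i j * (s i : ℝ) ≤ 1) ∧
          (∀ i ∉ S, ∀ j, x i j = 0) ∧
          v = ∑ i, ∑ j, x i j * p i j } (φ S)) :
    (∀ S T : Finset (Fin n), φ (S ∪ T) + φ (S ∩ T) ≤ φ S + φ T) ∧
    (∀ S T : Finset (Fin n), S ⊆ T → φ S ≤ φ T) ∧
    (∀ S : Finset (Fin n), 0 ≤ φ S) := by
  let σ : Fin n → ℝ := fun i => s i
  have hσ : 0 ≤ σ := fun i => Rat.cast_nonneg.2 (hs i).le
  have le_φ : ∀ S x, IsGapFeasible σ S x → ∑ i, ∑ j, x i j * p i j ≤ φ S :=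
    fun S x ⟨hx₀, hrow, hcol, hS⟩ => (hφ S).2 ⟨x, hx₀, hrow, hcol, hS, rfl⟩
  have φ_eq : ∀ S, ∃ x, IsGapFeasible σ S x ∧ φ S = ∑ i, ∑ j, x i j * p i j := fun S => by
    obtain ⟨x, hx₀, hrow, hcol, hS, hx⟩ := (hφ S).1
    exact ⟨x, ⟨hx₀, hrow, hcol, hS⟩, hx⟩
  refine ⟨fun S T => ?_, fun S T hST => ?_, fun S => ?_⟩
  · obtain ⟨u, v, hd, hS⟩ := exists_isGapDual_le (le_φ S)
    obtain ⟨u', v', hd', hT⟩ := exists_isGapDual_le (le_φ T)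
    obtain ⟨x, hx, hφx⟩ := φ_eq (S ∪ T)
    obtain ⟨x', hx', hφx'⟩ := φ_eq (S ∩ T)
    have h_union := (hd.union hd' hσ).profit_le hx
    have h_inter := (hd.inter hd').profit_le hx'
    have h_v : ∑ j, (v ⊔ v') j + ∑ j, (v ⊓ v') j = ∑ j, v j + ∑ j, v' j := by
      simp only [← sum_add_distrib, Pi.sup_apply, Pi.inf_apply, max_add_min]
    linarith [sum_unionDual_add_sum_sup S T u u']
  · obtain ⟨x, hx, hφx⟩ := φ_eq S
    exact hφx ▸ le_φ T x (hx.mono hST)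
  · simpa using le_φ S 0 (isGapFeasible_zero σ S)

/-- The LP-value function φ of the generalized assignment LP is submodular,
monotone and non-negative. -/
theorem phi_submodular_monotone_nonneg
    (n m : ℕ) (s : Fin n → ℚ) (hs : ∀ i, 0 < s i)
    (p : Fin n → Fin m → ℝ) (hp : ∀ i j, 0 ≤ p i j)
    (φ : Finset (Fin n) → ℝ)
    (hφ : ∀ S : Finset (Fin n), IsGreatest
      { v : ℝ | ∃ x : Fin n → Fin m → ℝ,
          (∀ i j, 0 ≤ x i j) ∧
          (∀ i, ∑ j, x i j ≤ 1) ∧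
          (∀ j, ∑ i, x i j * (s i : ℝ) ≤ 1) ∧
          (∀ i ∉ S, ∀ j, x i j = 0) ∧
          v = ∑ i, ∑ j, x i j * p i j } (φ S)) :
    (∀ S T : Finset (Fin n), φ (S ∪ T) + φ (S ∩ T) ≤ φ S + φ T) ∧
    (∀ S T : Finset (Fin n), S ⊆ T → φ S ≤ φ T) ∧
    (∀ S : Finset (Fin n), 0 ≤ φ S) :=
  phi_submodular_monotone_nonneg_general n m s hs p φ hφ
end

section
/- Let Ω = {1,...,n} be a finite ground set, let m > 0 be a knapsack capacity, and suppose every element i ∈ Ω has a size s_i with 0 ≤ s_i ≤ m/2. Let f: 2^Ω → ℝ be a non-negative, monotone, submodular set function, and let OPT = max{ f(S) : S ⊆ Ω, Σ_{i∈S} s_i ≤ m }. Then there exists a subset S ⊆ Ω with Σ_{i∈S} s_i ≤ m/2 and f(S) ≥ OPT/3. -/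
/-!
Take an optimal set `T`, of size at most `m`. A cardinality-maximal subset `A ⊆ T` of size at
most `m/2` leaves some `e ∈ T \ A` with `s(A) + s(e) > m/2` (or else `A = T`), so
`T = A ∪ {e} ∪ (T \ (A ∪ {e}))` is a cover of `T` by three sets of size at most `m/2`.
A non-negative submodular function is subadditive, so one of the three pieces carries at least
a third of `f(T) = OPT`.
-/

open Finset

variable {α : Type*} [DecidableEq α]

theorem map_union_le_add_of_submodular (f : Finset α → ℝ) (hf_nonneg : ∀ S, 0 ≤ f S)
    (hf_submod : ∀ S T : Finset α, f (S ∪ T) + f (S ∩ T) ≤ f S + f T) (S T : Finset α) :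
    f (S ∪ T) ≤ f S + f T := by
  linarith [hf_submod S T, hf_nonneg (S ∩ T)]

theorem exists_subset_sum_le_forall_add_gt (s : α → ℝ) {c : ℝ} (hc : 0 ≤ c) (T : Finset α) :
    ∃ A ⊆ T, ∑ i ∈ A, s i ≤ c ∧ ∀ e ∈ T, e ∉ A → c < s e + ∑ i ∈ A, s i := by
  set P := T.powerset.filter (fun A => ∑ i ∈ A, s i ≤ c)
  have hP : ∀ A, A ∈ P ↔ A ⊆ T ∧ ∑ i ∈ A, s i ≤ c := fun A => by
    simp only [P, mem_filter, mem_powerset]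
  obtain ⟨A, hAP, hAmax⟩ := P.exists_max_image card ⟨∅, (hP ∅).2 ⟨empty_subset T, by simpa⟩⟩
  obtain ⟨hAT, hAc⟩ := (hP A).1 hAP
  refine ⟨A, hAT, hAc, fun e heT heA => ?_⟩
  by_contra! h
  have hle := hAmax (insert e A)
    ((hP _).2 ⟨insert_subset heT hAT, by rwa [sum_insert heA]⟩)
  rw [card_insert_of_notMem heA] at hle
  omega

theorem exists_union_union_eq_sum_le (s : α → ℝ) {c : ℝ} (T : Finset α)
    (hs_nonneg : ∀ i ∈ T, 0 ≤ s i) (hs_le : ∀ i ∈ T, s i ≤ c) (hT : ∑ i ∈ T, s i ≤ 2 * c) :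
    ∃ A B C : Finset α, A ∪ B ∪ C = T ∧
      ∑ i ∈ A, s i ≤ c ∧ ∑ i ∈ B, s i ≤ c ∧ ∑ i ∈ C, s i ≤ c := by
  have hc : 0 ≤ c := by linarith [sum_nonneg hs_nonneg]
  obtain ⟨A, hAT, hAc, hA_max⟩ := exists_subset_sum_le_forall_add_gt s hc T
  by_cases hTA : T ⊆ A
  · exact ⟨A, ∅, ∅, by simpa using hAT.antisymm hTA, hAc, by simpa, by simpa⟩
  obtain ⟨e, heT, heA⟩ := not_subset.mp hTA
  have hins : insert e A ⊆ T := insert_subset heT hAT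
  refine ⟨A, {e}, T \ insert e A, ?_, hAc, by simpa using hs_le e heT, ?_⟩
  · rw [union_comm A, ← insert_eq, union_sdiff_of_subset hins]
  · have hsplit := sum_sdiff (f := s) hins
    rw [sum_insert heA] at hsplit
    linarith [hA_max e heT heA]

theorem submodular_reserved_capacity_general
    (n : ℕ) (m : ℝ)
    (s : Fin n → ℝ) (hs : ∀ i, 0 ≤ s i ∧ s i ≤ m / 2)
    (f : Finset (Fin n) → ℝ)
    (hf_nonneg : ∀ S, 0 ≤ f S)
    (hf_submod : ∀ S T : Finset (Fin n), f (S ∪ T) + f (S ∩ T) ≤ f S + f T)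
    (OPT : ℝ)
    (hOPT : IsGreatest
      { v : ℝ | ∃ S : Finset (Fin n), (∑ i ∈ S, s i) ≤ m ∧ v = f S } OPT) :
    ∃ S : Finset (Fin n), (∑ i ∈ S, s i) ≤ m / 2 ∧ OPT / 3 ≤ f S := by
  obtain ⟨T, hTm, rfl⟩ := hOPT.1
  obtain ⟨A, B, C, hcover, hA, hB, hC⟩ := exists_union_union_eq_sum_le s T
    (fun i _ => (hs i).1) (fun i _ => (hs i).2) (by linarith)
  have hsubadd := map_union_le_add_of_submodular f hf_nonneg hf_submod
  have hT : f T ≤ f A + f B + f C := by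
    rw [← hcover]
    linarith [hsubadd (A ∪ B) C, hsubadd A B]
  by_cases hA3 : f T / 3 ≤ f A
  · exact ⟨A, hA, hA3⟩
  by_cases hB3 : f T / 3 ≤ f B
  · exact ⟨B, hB, hB3⟩
  exact ⟨C, hC, by linarith⟩

/-- Submodular optimization with reserved capacity: if every element has size
at most `m/2`, there is a set of total size at most `m/2` whose value is at
least one third of the optimum over sets of total size at most `m`. -/
theorem submodular_reserved_capacity
    (n : ℕ) (m : ℝ) (hm : 0 < m)
    (s : Fin n → ℝ) (hs : ∀ i, 0 ≤ s i ∧ s i ≤ m / 2)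
    (f : Finset (Fin n) → ℝ)
    (hf_nonneg : ∀ S, 0 ≤ f S)
    (hf_mono : ∀ S T : Finset (Fin n), S ⊆ T → f S ≤ f T)
    (hf_submod : ∀ S T : Finset (Fin n), f (S ∪ T) + f (S ∩ T) ≤ f S + f T)
    (OPT : ℝ)
    (hOPT : IsGreatest
      { v : ℝ | ∃ S : Finset (Fin n), (∑ i ∈ S, s i) ≤ m ∧ v = f S } OPT) :
    ∃ S : Finset (Fin n), (∑ i ∈ S, s i) ≤ m / 2 ∧ OPT / 3 ≤ f S :=
  submodular_reserved_capacity_general n m s hs f hf_nonneg hf_submod OPT hOPT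
end

section
/- Let I be a finite set of items with sizes s_i > 0, let M = {1,...,m} be a set of m unit-capacity bins, and let p_{i,j} ≥ 0 be profits. Let S ⊆ I be a set of items with total size s(S) = Σ_{i∈S} s_i ≤ m, and let x be a feasible fractional solution, i.e., x_{i,j} ≥ 0 for all i, j, Σ_{j∈M} x_{i,j} ≤ 1 for every i ∈ I, Σ_{i∈I} x_{i,j}·s_i ≤ 1 for every j ∈ M, and x_{i,j} = 0 for i ∉ S. Then there exists an assignment U = (U_1,...,U_m) of items to bins, with U_j ⊆ I pairwise disjoint and ∪_{j=1}^m U_j = S, which is almost feasible (for every bin j there is an element u_j* ∈ U_j ∪ {∅} with Σ_{i ∈ U_j\{u_j*}} s_i ≤ 1), and whose profit Σ_{j=1}^m Σ_{i∈U_j} p_{i,j} is at least Σ_{i∈I, j∈M} x_{i,j}·p_{i,j}. -/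
/-!
First extend `x` so that every item of `S` is fully assigned, spreading the missing sizes over
the residual capacities in proportion (possible because `s(S) ≤ m`). Then sort the items by
decreasing size and, in each bin, stack them in this order and cut the stack into unit slots
(Shmoys–Tardos). This gives a fractional matching between items and slots that saturates the
items and has the fractional profit, so by Birkhoff–von Neumann some injection of the items into
slots, inside its support, is at least as profitable. In a bin, an item in slot `t ≥ 1` is no
larger than any item meeting the full slot `t - 1`; hence all items but the one in slot `0`
weigh at most the fractional load of the bin, which is at most `1`.
-/

open Finset

/-- The part of the unit slot `[t, t + 1]` lying below the level `z`. -/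
noncomputable def slotFill (z : ℝ) (t : ℕ) : ℝ := min 1 (max 0 (z - t))

lemma slotFill_nonneg (z : ℝ) (t : ℕ) : 0 ≤ slotFill z t :=
  le_min zero_le_one (le_max_left _ _)

lemma slotFill_le_one (z : ℝ) (t : ℕ) : slotFill z t ≤ 1 := min_le_left _ _

lemma slotFill_mono (t : ℕ) : Monotone (slotFill · t) := fun _ _ h =>
  min_le_min_left _ (max_le_max_left _ (sub_le_sub_right h _))

lemma slotFill_eq_zero_of_le {z : ℝ} {t : ℕ} (h : z ≤ t) : slotFill z t = 0 := by
  simp [slotFill, max_eq_left (sub_nonpos.2 h)]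

lemma slotFill_eq_one_of_le {z : ℝ} {t : ℕ} (h : t + 1 ≤ z) : slotFill z t = 1 :=
  min_eq_left (le_max_of_le_right (by linarith))

lemma sum_range_slotFill (z : ℝ) (n : ℕ) :
    ∑ t ∈ range n, slotFill z t = min (n : ℝ) (max 0 z) := by
  induction n with
  | zero => simp
  | succ n ih =>
    rw [sum_range_succ, ih, slotFill]
    push_cast
    rcases le_total z n with h | h
    · have : max 0 z ≤ n := max_le (Nat.cast_nonneg n) h
      rw [min_eq_right this, max_eq_left (sub_nonpos.2 h), min_eq_right zero_le_one, add_zero,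
        min_eq_right (by linarith)]
    · rw [min_eq_left (le_max_of_le_right h), max_eq_right (sub_nonneg.2 h),
        max_eq_right ((Nat.cast_nonneg n).trans h)]
      rcases le_total 1 (z - n) with h' | h'
      · rw [min_eq_left h', min_eq_left (by linarith)]
      · rw [min_eq_right h', min_eq_right (by linarith)]
        ring

section PrefixSum

variable {n : ℕ} (v : Fin n → ℝ)

noncomputable def prefixSum (r : ℕ) : ℝ := ∑ k with k.val < r, v k

@[simp] lemma prefixSum_zero : prefixSum v 0 = 0 := by simp [prefixSum]

lemma prefixSum_of_le {r : ℕ} (h : n ≤ r) : prefixSum v r = ∑ k, v k := by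
  rw [prefixSum, filter_true_of_mem fun k _ => k.isLt.trans_le h]

lemma prefixSum_succ (k : Fin n) : prefixSum v (k + 1) = prefixSum v k + v k := by
  have : univ.filter (fun k' : Fin n => k'.val < k + 1) =
      insert k (univ.filter fun k' : Fin n => k'.val < k) := by
    ext k'
    simp only [mem_filter_univ, mem_insert, Nat.lt_succ_iff, le_iff_eq_or_lt, Fin.val_inj]
  unfold prefixSum
  rw [this, sum_insert (by simp), add_comm]

variable {v}

lemma prefixSum_mono (hv : ∀ k, 0 ≤ v k) : Monotone (prefixSum v) := fun _ _ h =>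
  sum_le_sum_of_subset_of_nonneg (monotone_filter_right _ fun _ _ hk => lt_of_lt_of_le hk h)
    fun k _ _ => hv k

lemma prefixSum_nonneg (hv : ∀ k, 0 ≤ v k) (r : ℕ) : 0 ≤ prefixSum v r :=
  sum_nonneg fun k _ => hv k

lemma prefixSum_le_sum (hv : ∀ k, 0 ≤ v k) (r : ℕ) : prefixSum v r ≤ ∑ k, v k :=
  sum_le_univ_sum_of_nonneg hv

lemma prefixSum_le_card (hv0 : ∀ k, 0 ≤ v k) (hv1 : ∀ k, v k ≤ 1) (r : ℕ) : prefixSum v r ≤ n :=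
  (prefixSum_le_sum hv0 r).trans <| by simpa using sum_le_card_nsmul univ v 1 fun k _ => hv1 k

end PrefixSum

section SlotShare

variable {n : ℕ} (v : Fin n → ℝ)

/-- With the items stacked in a bin in the order of `Fin n`, item `k` occupies the levels
`[prefixSum v k, prefixSum v (k + 1)]`; this is the part of the slot `[t, t + 1]` it covers. -/
noncomputable def slotShare (k : Fin n) (t : ℕ) : ℝ :=
  slotFill (prefixSum v (k + 1)) t - slotFill (prefixSum v k) t

lemma sum_slotShare_univ (t : ℕ) : ∑ k, slotShare v k t = slotFill (∑ k, v k) t := by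
  unfold slotShare
  rw [Fin.sum_univ_eq_sum_range
      (fun r => slotFill (prefixSum v (r + 1)) t - slotFill (prefixSum v r) t),
    sum_range_sub (fun r => slotFill (prefixSum v r) t), prefixSum_of_le v le_rfl,
    prefixSum_zero, slotFill_eq_zero_of_le (Nat.cast_nonneg t), sub_zero]

variable {v}

lemma slotShare_nonneg (hv : ∀ k, 0 ≤ v k) (k : Fin n) (t : ℕ) : 0 ≤ slotShare v k t :=
  sub_nonneg.2 (slotFill_mono t (prefixSum_mono hv (Nat.le_succ k)))

lemma sum_range_slotShare (hv0 : ∀ k, 0 ≤ v k) (hv1 : ∀ k, v k ≤ 1) (k : Fin n) :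
    ∑ t ∈ range n, slotShare v k t = v k := by
  have hn := prefixSum_le_card hv0 hv1 (k + 1)
  have h0 := prefixSum_nonneg hv0 k
  simp only [slotShare, sum_sub_distrib, sum_range_slotFill]
  rw [max_eq_right h0, max_eq_right (h0.trans (prefixSum_mono hv0 (Nat.le_succ k))),
    min_eq_right hn, min_eq_right ((prefixSum_mono hv0 (Nat.le_succ k)).trans hn),
    prefixSum_succ]
  ring

lemma lt_of_slotShare_pos {k : Fin n} {t : ℕ} (h : 0 < slotShare v k t) :
    prefixSum v k < t + 1 ∧ (t : ℝ) < prefixSum v (k + 1) := by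
  unfold slotShare at h
  constructor
  · by_contra! hk
    linarith [slotFill_eq_one_of_le hk, slotFill_le_one (prefixSum v (k + 1)) t]
  · by_contra! hk
    linarith [slotFill_eq_zero_of_le hk, slotFill_nonneg (prefixSum v k) t]

variable {s : Fin n → ℝ}

lemma le_sum_slotShare_pred_mul (hs : Antitone s) (hv : ∀ k, 0 ≤ v k) {k : Fin n} {t : ℕ}
    (ht : t ≠ 0) (h : 0 < slotShare v k t) : s k ≤ ∑ k', slotShare v k' (t - 1) * s k' := by
  have hlt := (lt_of_slotShare_pos h).2
  have hpred : ((t - 1 : ℕ) : ℝ) + 1 = t := by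
    rw [← Nat.cast_add_one, Nat.sub_one_add_one ht]
  -- slot `t - 1` lies below the top of item `k`, so it is full, and only items `k' ≤ k` meet it
  have hfull : ∑ k', slotShare v k' (t - 1) = 1 := by
    rw [sum_slotShare_univ]
    exact slotFill_eq_one_of_le (by linarith [prefixSum_le_sum hv (k + 1)])
  calc s k = ∑ k', slotShare v k' (t - 1) * s k := by rw [← sum_mul, hfull, one_mul]
    _ ≤ ∑ k', slotShare v k' (t - 1) * s k' := sum_le_sum fun k' _ => by
      rcases (slotShare_nonneg hv k' (t - 1)).eq_or_lt with h0 | hpos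
      · simp [← h0]
      · refine mul_le_mul_of_nonneg_left (hs ?_) hpos.le
        by_contra! hkk'
        have := prefixSum_mono hv (Nat.succ_le_of_lt hkk')
        linarith [(lt_of_slotShare_pos hpos).1]

theorem sum_le_of_slotShare_pos (hs0 : ∀ k, 0 ≤ s k) (hs : Antitone s) (hv0 : ∀ k, 0 ≤ v k)
    (hv1 : ∀ k, v k ≤ 1) (L : Finset (Fin n)) (τ : Fin n → ℕ) (hτ : Set.InjOn τ L)
    (hτ0 : ∀ k ∈ L, τ k ≠ 0) (hpos : ∀ k ∈ L, 0 < slotShare v k (τ k)) :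
    ∑ k ∈ L, s k ≤ ∑ k, v k * s k := by
  have hinj : Set.InjOn (τ · - 1) L := fun k hk k' hk' h =>
    hτ hk hk' (by have := hτ0 k hk; have := hτ0 k' hk'; simp only at h; omega)
  have hsub : L.image (τ · - 1) ⊆ range n := by
    simp only [subset_iff, mem_image, mem_range]
    rintro _ ⟨k, hk, rfl⟩
    have : (τ k : ℝ) < n :=
      (lt_of_slotShare_pos (hpos k hk)).2.trans_le (prefixSum_le_card hv0 hv1 _)
    exact lt_of_le_of_lt (Nat.sub_le _ _) (by exact_mod_cast this)
  calc ∑ k ∈ L, s k ≤ ∑ k ∈ L, ∑ k', slotShare v k' (τ k - 1) * s k' :=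
        sum_le_sum fun k hk => le_sum_slotShare_pred_mul hs hv0 (hτ0 k hk) (hpos k hk)
    _ = ∑ r ∈ L.image (τ · - 1), ∑ k', slotShare v k' r * s k' :=
        (sum_image (f := fun r => ∑ k', slotShare v k' r * s k') hinj).symm
    _ ≤ ∑ r ∈ range n, ∑ k', slotShare v k' r * s k' :=
        sum_le_sum_of_subset_of_nonneg hsub fun r _ _ =>
          sum_nonneg fun k' _ => mul_nonneg (slotShare_nonneg hv0 k' r) (hs0 k')
    _ = ∑ k, v k * s k := by
        rw [sum_comm]
        simp only [← sum_mul, sum_range_slotShare hv0 hv1]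

theorem sum_le_or_sum_erase_le_of_slotShare_pos (hs0 : ∀ k, 0 ≤ s k) (hs : Antitone s)
    (hv0 : ∀ k, 0 ≤ v k) (hv1 : ∀ k, v k ≤ 1) (L : Finset (Fin n)) (τ : Fin n → ℕ)
    (hτ : Set.InjOn τ L) (hpos : ∀ k ∈ L, 0 < slotShare v k (τ k)) :
    ∑ k ∈ L, s k ≤ ∑ k, v k * s k ∨ ∃ u ∈ L, ∑ k ∈ L.erase u, s k ≤ ∑ k, v k * s k := by
  by_cases h0 : ∃ u ∈ L, τ u = 0
  · obtain ⟨u, hu, hu0⟩ := h0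
    refine .inr ⟨u, hu, sum_le_of_slotShare_pos hs0 hs hv0 hv1 _ τ (hτ.mono (erase_subset u L))
      (fun k hk hk0 => ne_of_mem_erase hk (hτ (mem_of_mem_erase hk) hu (hk0.trans hu0.symm)))
      fun k hk => hpos k (mem_of_mem_erase hk)⟩
  · push Not at h0
    exact .inl (sum_le_of_slotShare_pos hs0 hs hv0 hv1 L τ hτ h0 hpos)

end SlotShare

theorem exists_perm_pos_sum_mul_le {ι : Type*} [Fintype ι] [DecidableEq ι] {B : Matrix ι ι ℝ}
    (hB : B ∈ doublyStochastic ℝ ι) (W : Matrix ι ι ℝ) :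
    ∃ σ : Equiv.Perm ι, (∀ i, 0 < B i (σ i)) ∧ ∑ i, ∑ j, B i j * W i j ≤ ∑ i, W i (σ i) := by
  obtain ⟨w, hw0, hw1, rfl⟩ := exists_eq_sum_perm_of_mem_doublyStochastic hB
  have happly : ∀ i j, (∑ σ, w σ • σ.permMatrix ℝ) i j = ∑ σ, w σ * if σ i = j then 1 else 0 := by
    simp [Matrix.sum_apply]
  set c := ∑ i, ∑ j, (∑ σ, w σ • σ.permMatrix ℝ) i j * W i j
  have hc : c = ∑ σ, w σ * ∑ i, W i (σ i) := by
    simp only [c, happly, sum_mul, mul_sum, mul_assoc, ite_mul, one_mul, zero_mul, mul_ite,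
      mul_zero]
    refine (sum_congr rfl fun i _ => sum_comm).trans ?_
    simp only [sum_ite_eq, mem_univ, if_true]
    exact sum_comm
  have hsupp : ∀ f : Equiv.Perm ι → ℝ, ∑ σ with 0 < w σ, w σ * f σ = ∑ σ, w σ * f σ :=
    fun f => sum_filter_of_ne fun σ _ h => (hw0 σ).lt_of_ne' (left_ne_zero_of_mul h)
  have hne : (univ.filter (0 < w ·)).Nonempty := by
    rw [nonempty_iff_ne_empty]
    intro h
    have := hsupp fun _ => 1
    simp [h, hw1] at this
  obtain ⟨σ, hσ, hle⟩ := exists_le_of_sum_le hne (f := fun σ => w σ * c)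
    (g := fun σ => w σ * ∑ i, W i (σ i)) (by rw [hsupp, hsupp, ← sum_mul, hw1, one_mul, hc])
  have hσ : 0 < w σ := (mem_filter.1 hσ).2
  refine ⟨σ, fun i => ?_, le_of_mul_le_mul_left hle hσ⟩
  rw [happly]
  calc 0 < w σ := hσ
    _ = w σ * if σ i = σ i then 1 else 0 := by simp
    _ ≤ ∑ τ, w τ * if τ i = σ i then 1 else 0 :=
      single_le_sum (f := fun τ => w τ * if τ i = σ i then 1 else 0)
        (fun τ _ => mul_nonneg (hw0 τ) (by split_ifs <;> norm_num)) (mem_univ σ)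

open Matrix in
theorem exists_injective_of_fractional_matching {α β : Type*} [Fintype α] [Fintype β]
    [DecidableEq α] [DecidableEq β] (y : Matrix α β ℝ) (hy0 : ∀ a b, 0 ≤ y a b)
    (hrow : ∀ a, ∑ b, y a b = 1) (hcol : ∀ b, ∑ a, y a b ≤ 1) (W : Matrix α β ℝ) :
    ∃ g : α → β, Function.Injective g ∧ (∀ a, 0 < y a (g a)) ∧
      ∑ a, ∑ b, y a b * W a b ≤ ∑ a, W a (g a) := by
  set B : Matrix (α ⊕ β) (α ⊕ β) ℝ := fromBlocks 0 y yᵀ (diagonal fun b => 1 - ∑ a, y a b)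
  have hB : B ∈ doublyStochastic ℝ (α ⊕ β) := by
    refine mem_doublyStochastic_iff_sum.2 ⟨?_, ?_, ?_⟩
    · rintro (a | b) (a' | b')
      · simp [B]
      · exact hy0 a b'
      · exact hy0 a' b
      · simp only [B, fromBlocks_apply₂₂, diagonal_apply]
        split_ifs
        · linarith [hcol b]
        · exact le_rfl
    · rintro (a | b) <;> simp [B, Fintype.sum_sum_type, hrow, diagonal_apply]
    · rintro (a | b) <;> simp [B, Fintype.sum_sum_type, hrow, diagonal_apply]
  obtain ⟨σ, hpos, hle⟩ := exists_perm_pos_sum_mul_le hB (fromBlocks 0 W 0 0)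
  have hright : ∀ a, ∃ b, σ (.inl a) = .inr b := by
    intro a
    rcases h : σ (.inl a) with a' | b
    · simpa [B, h] using hpos (.inl a)
    · exact ⟨b, rfl⟩
  choose g hg using hright
  refine ⟨g, fun a a' h => ?_, fun a => ?_, ?_⟩
  · simpa using σ.injective ((hg a).trans ((congrArg Sum.inr h).trans (hg a').symm))
  · simpa [B, hg a] using hpos (.inl a)
  · have hW : ∀ (b : β) (c : α ⊕ β), fromBlocks 0 W 0 0 (.inr b) c = 0 := by
      rintro b (_ | _) <;> rfl
    simpa [B, Fintype.sum_sum_type, hg, hW] using hle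

section Transport

variable {ι κ : Type*} [Fintype ι] [Fintype κ]

theorem exists_transport_of_sum_le {a : ι → ℝ} {b : κ → ℝ} (ha : ∀ i, 0 ≤ a i)
    (hb : ∀ j, 0 ≤ b j) (hab : ∑ i, a i ≤ ∑ j, b j) :
    ∃ z : ι → κ → ℝ, (∀ i j, 0 ≤ z i j) ∧ (∀ i, ∑ j, z i j = a i) ∧ ∀ j, ∑ i, z i j ≤ b j := by
  rcases (sum_nonneg fun j _ => hb j).eq_or_lt with h0 | hpos
  · have ha0 : ∀ i, a i = 0 := fun i =>
      (sum_eq_zero_iff_of_nonneg fun i _ => ha i).1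
        (le_antisymm (hab.trans h0.ge) (sum_nonneg fun i _ => ha i)) i (mem_univ i)
    exact ⟨0, fun _ _ => le_rfl, by simp [ha0], fun j => by simpa using hb j⟩
  · refine ⟨fun i j => a i * b j / ∑ j, b j, fun i j => by have := ha i; have := hb j; positivity,
      fun i => ?_, fun j => ?_⟩
    · rw [← sum_div, ← mul_sum, mul_div_assoc, div_self hpos.ne', mul_one]
    · calc ∑ i, a i * b j / ∑ j, b j = b j * ((∑ i, a i) / ∑ j, b j) := by
            rw [sum_div, mul_sum]
            exact sum_congr rfl fun i _ => by ring
        _ ≤ b j * 1 := mul_le_mul_of_nonneg_left ((div_le_one hpos).2 hab) (hb j)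
        _ = b j := mul_one _

theorem exists_le_sum_eq_one_of_sum_le_card [DecidableEq ι] {s : ι → ℝ} (hs : ∀ i, 0 < s i)
    {S : Finset ι} (hS : ∑ i ∈ S, s i ≤ Fintype.card κ) {x : ι → κ → ℝ}
    (hrow : ∀ i, ∑ j, x i j ≤ 1) (hcap : ∀ j, ∑ i, x i j * s i ≤ 1)
    (hout : ∀ i ∉ S, ∀ j, x i j = 0) :
    ∃ x' : ι → κ → ℝ, (∀ i j, x i j ≤ x' i j) ∧ (∀ i ∈ S, ∑ j, x' i j = 1) ∧
      (∀ i ∉ S, ∀ j, x' i j = 0) ∧ ∀ j, ∑ i, x' i j * s i ≤ 1 := by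
  set a : ι → ℝ := fun i => if i ∈ S then (1 - ∑ j, x i j) * s i else 0
  have ha : ∀ i, 0 ≤ a i := fun i => by
    by_cases hi : i ∈ S
    · simpa [a, hi] using mul_nonneg (sub_nonneg.2 (hrow i)) (hs i).le
    · simp [a, hi]
  have hload : ∑ j, ∑ i, x i j * s i = ∑ i ∈ S, (∑ j, x i j) * s i := by
    rw [sum_comm, ← sum_subset (subset_univ S) fun i _ hi => by simp [hout i hi]]
    simp only [sum_mul]
  have hab : ∑ i, a i ≤ ∑ j, (1 - ∑ i, x i j * s i) := by
    simp only [a, sum_ite_mem, univ_inter, sum_sub_distrib, sub_mul, one_mul, hload]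
    simp only [sum_const, card_univ, nsmul_eq_mul, mul_one]
    linarith
  obtain ⟨z, hz0, hzrow, hzcol⟩ :=
    exists_transport_of_sum_le ha (fun j => sub_nonneg.2 (hcap j)) hab
  refine ⟨fun i j => x i j + z i j / s i, fun i j => ?_, fun i hi => ?_, fun i hi j => ?_,
    fun j => ?_⟩
  · have := div_nonneg (hz0 i j) (hs i).le
    linarith
  · rw [sum_add_distrib, ← sum_div, hzrow]
    simp only [a, if_pos hi, mul_div_cancel_right₀ _ (hs i).ne']
    ring
  · have hz : z i j = 0 := (sum_eq_zero_iff_of_nonneg fun j _ => hz0 i j).1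
      (by simp [hzrow, a, hi]) j (mem_univ j)
    simp [hout i hi j, hz]
  · simp only [add_mul, div_mul_cancel₀ _ (hs _).ne', sum_add_distrib]
    linarith [hzcol j]

end Transport

theorem exists_fin_embedding_antitone {ι α : Type*} [LinearOrder α] (s : ι → α) (S : Finset ι) :
    ∃ e : Fin #S ↪ ι, univ.map e = S ∧ Antitone (s ∘ e) := by
  set f : Fin #S ≃ S := S.equivFin.symm
  set σ := Tuple.sort (OrderDual.toDual ∘ s ∘ (↑) ∘ f)
  refine ⟨(σ.trans f).toEmbedding.trans (Function.Embedding.subtype _), ?_,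
    fun k l hkl => Tuple.monotone_sort (OrderDual.toDual ∘ s ∘ Subtype.val ∘ f) hkl⟩
  ext i
  simp only [mem_map, mem_univ, true_and]
  exact ⟨fun ⟨k, h⟩ => h ▸ (f (σ k)).2, fun hi => ⟨σ.symm (f.symm ⟨i, hi⟩), by simp⟩⟩

section Rounding

variable {ι κ : Type*} [Fintype ι] [Fintype κ] [DecidableEq ι]

def IsAlmostFeasibleRounding (s : ι → ℝ) (p x : ι → κ → ℝ) (S : Finset ι) (U : κ → Finset ι) :
    Prop :=
  (∀ j k, j ≠ k → Disjoint (U j) (U k)) ∧ univ.biUnion U = S ∧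
    (∀ j, (∑ i ∈ U j, s i) ≤ 1 ∨ ∃ u ∈ U j, (∑ i ∈ (U j).erase u, s i) ≤ 1) ∧
    (∑ i, ∑ j, x i j * p i j) ≤ ∑ j, ∑ i ∈ U j, p i j

theorem IsAlmostFeasibleRounding.map {ι' : Type*} [Fintype ι'] [DecidableEq ι'] (e : ι' ↪ ι)
    {s : ι → ℝ} {p x : ι → κ → ℝ} {S : Finset ι'} {U : κ → Finset ι'}
    (hx : ∀ i ∉ Set.range e, ∀ j, x i j = 0)
    (h : IsAlmostFeasibleRounding (s ∘ e) (fun k => p (e k)) (fun k => x (e k)) S U) :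
    IsAlmostFeasibleRounding s p x (S.map e) fun j => (U j).map e := by
  obtain ⟨hdisj, hcover, hfeas, hprofit⟩ := h
  refine ⟨fun j k hjk => (disjoint_map e).2 (hdisj j k hjk), ?_, fun j => ?_, ?_⟩
  · rw [← hcover]
    ext i
    simp only [mem_biUnion, mem_map, mem_univ, true_and]
    exact ⟨fun ⟨j, k, hk, h⟩ => ⟨k, ⟨j, hk⟩, h⟩, fun ⟨k, ⟨j, hk⟩, h⟩ => ⟨j, k, hk, h⟩⟩
  · simpa only [sum_map, ← map_erase, mem_map, exists_exists_and_eq_and, Function.comp_apply] using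
      hfeas j
  · calc ∑ i, ∑ j, x i j * p i j = ∑ i ∈ univ.map e, ∑ j, x i j * p i j :=
          (sum_subset (subset_univ _) fun i _ hi => by simp [hx i (by simpa using hi)]).symm
      _ ≤ ∑ j, ∑ i ∈ (U j).map e, p i j := by simpa only [sum_map] using hprofit

theorem exists_isAlmostFeasibleRounding_of_antitone [DecidableEq κ] {N : ℕ} {s : Fin N → ℝ}
    (hs0 : ∀ k, 0 ≤ s k) (hs : Antitone s) (p : Fin N → κ → ℝ) {x : Fin N → κ → ℝ}
    (hx0 : ∀ k j, 0 ≤ x k j) (hrow : ∀ k, ∑ j, x k j = 1) (hcap : ∀ j, ∑ k, x k j * s k ≤ 1) :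
    ∃ U, IsAlmostFeasibleRounding s p x univ U := by
  have hx1 : ∀ k j, x k j ≤ 1 := fun k j =>
    hrow k ▸ single_le_sum (fun j _ => hx0 k j) (mem_univ j)
  have hslots : ∀ k j, ∑ t : Fin N, slotShare (x · j) k t = x k j := fun k j => by
    rw [Fin.sum_univ_eq_sum_range (slotShare (x · j) k),
      sum_range_slotShare (hx0 · j) (hx1 · j)]
  obtain ⟨g, hg, hpos, hprofit⟩ :=
    exists_injective_of_fractional_matching (fun k (q : κ × Fin N) => slotShare (x · q.1) k q.2)
      (fun k q => slotShare_nonneg (hx0 · q.1) k q.2)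
      (fun k => by rw [Fintype.sum_prod_type, ← hrow k]; exact sum_congr rfl fun j _ => hslots k j)
      (fun q => (sum_slotShare_univ _ _).trans_le (slotFill_le_one _ _)) fun k q => p k q.1
  refine ⟨fun j => univ.filter fun k => (g k).1 = j,
    fun j j' hjj' => disjoint_filter.2 fun k _ h h' => hjj' (h.symm.trans h'), by ext; simp,
    fun j => ?_, ?_⟩
  · refine (sum_le_or_sum_erase_le_of_slotShare_pos hs0 hs (hx0 · j) (hx1 · j) _ (g · |>.2)
      (fun k hk k' hk' h => hg (Prod.ext ?_ (Fin.ext h))) fun k hk => ?_).imp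
      (·.trans (hcap j)) fun ⟨u, hu, h⟩ => ⟨u, hu, h.trans (hcap j)⟩
    · exact (mem_filter.1 hk).2.trans (mem_filter.1 hk').2.symm
    · simpa [(mem_filter.1 hk).2] using hpos k
  · calc ∑ k, ∑ j, x k j * p k j = ∑ k, ∑ q : κ × Fin N, slotShare (x · q.1) k q.2 * p k q.1 :=
          sum_congr rfl fun k _ => by
            rw [Fintype.sum_prod_type]
            exact sum_congr rfl fun j _ => by simp only [← sum_mul, hslots]
      _ ≤ ∑ k, p k (g k).1 := hprofit
      _ = ∑ j, ∑ k with (g k).1 = j, p k j := by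
          rw [← sum_fiberwise univ (fun k => (g k).1)]
          exact sum_congr rfl fun j _ => sum_congr rfl fun k hk => by rw [(mem_filter.1 hk).2]

end Rounding

/-- Rounding a feasible fractional GAP solution on a set `S` of total size at
most `m` yields an almost feasible assignment of exactly the items of `S`
whose profit is at least the fractional profit. -/
theorem fractional_to_almost_feasible
    (n m : ℕ) (s : Fin n → ℝ) (hs : ∀ i, 0 < s i)
    (p : Fin n → Fin m → ℝ) (hp : ∀ i j, 0 ≤ p i j)
    (S : Finset (Fin n)) (hS : (∑ i ∈ S, s i) ≤ (m : ℝ))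
    (x : Fin n → Fin m → ℝ)
    (hx_nonneg : ∀ i j, 0 ≤ x i j)
    (hx_item : ∀ i, ∑ j, x i j ≤ 1)
    (hx_cap : ∀ j, ∑ i, x i j * s i ≤ 1)
    (hx_out : ∀ i ∉ S, ∀ j, x i j = 0) :
    ∃ U : Fin m → Finset (Fin n),
      (∀ j k, j ≠ k → Disjoint (U j) (U k)) ∧
      (Finset.univ.biUnion U = S) ∧
      (∀ j, (∑ i ∈ U j, s i) ≤ 1 ∨
        ∃ u ∈ U j, (∑ i ∈ (U j).erase u, s i) ≤ 1) ∧
      (∑ i, ∑ j, x i j * p i j) ≤ ∑ j, ∑ i ∈ U j, p i j := by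
  obtain ⟨x', hxx', hrow, hout, hcap⟩ :=
    exists_le_sum_eq_one_of_sum_le_card hs (by simpa using hS) hx_item hx_cap hx_out
  obtain ⟨e, he, hanti⟩ := exists_fin_embedding_antitone s S
  obtain ⟨U, hU⟩ := exists_isAlmostFeasibleRounding_of_antitone (fun k => (hs (e k)).le) hanti
    (fun k => p (e k)) (x := fun k => x' (e k)) (fun k j => (hx_nonneg _ j).trans (hxx' _ j))
    (fun k => hrow _ (he.subset (mem_map_of_mem e (mem_univ k))))
    fun j => by
      rw [← sum_map univ e fun i => x' i j * s i, he]
      exact (sum_le_univ_sum_of_nonneg fun i =>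
        mul_nonneg ((hx_nonneg i j).trans (hxx' i j)) (hs i).le).trans (hcap j)
  obtain ⟨hdisj, hcover, hfeas, hprofit⟩ :=
    hU.map e fun i hi => hout i fun hiS => hi (by simpa using he.symm.subset hiS)
  refine ⟨_, hdisj, hcover.trans he, hfeas, le_trans ?_ hprofit⟩
  exact sum_le_sum fun i _ => sum_le_sum fun j _ => mul_le_mul_of_nonneg_right (hxx' i j) (hp i j)
end

section
/- Let I be a finite set of items with sizes s_i satisfying 0 < s_i ≤ 1, let M = {1,...,m} be a set of m unit-capacity bins, and let p_{i,j} ≥ 0 be profits. Let U = (U_1,...,U_m) be an almost feasible assignment (for each bin j there is an element u_j* ∈ U_j such that Σ_{i∈U_j\{u_j*}} s_i ≤ 1) whose assigned items I(U) = ∪_{j=1}^m U_j satisfy Σ_{i∈I(U)} s_i ≤ m/2. Then there exists a feasible assignment U' = (U'_1,...,U'_m), i.e., with Σ_{i∈U'_j} s_i ≤ 1 for every bin j, such that I(U') = I(U) and p(U') ≥ (1/2)·p(U), where p(U) = Σ_{j=1}^m Σ_{i∈U_j} p_{i,j}. -/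
/-!
An assignment of the items `I` is encoded as a map `f` from items to bins; `binLoad s f K j` is
the total size of the items of `K` that `f` puts into bin `j`, and `h` is the home map of `U`.

Let `u j` be a largest item of each overfull bin `j`; by almost feasibility the rest of the bin
fits. We build two feasible assignments of `I`, one keeping every `u j` at home and one keeping
the rest of every overfull bin at home, such that each item stays at home in at least one of
them; since profits are nonnegative, one of the two earns at least half of `p(U)`.

Items that leave home must be reinserted. Items of size at most `1 / 2` are placed greedily:
as the total size is at most `m / 2`, some bin always has load at most `1 / 2`. Larger items
need distinct bins with room. The rest of an overfull bin `j` contains at most one large item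
`r`, which the first assignment sends to a light bin `δ j` (fitting, all items small); if `r`
does not fit there, it replaces the contents of `δ j`, which the second assignment keeps at
home instead. A mass count shows that enough light bins are left empty in the second assignment
for the large items `u j`.
-/

open Finset

section Load

variable {ι β : Type*} [DecidableEq β] (s : ι → ℝ)

def binLoad (f : ι → β) (K : Finset ι) (j : β) : ℝ := ∑ i ∈ K with f i = j, s i

theorem sum_binLoad [Fintype β] (f : ι → β) (K : Finset ι) :
    ∑ j, binLoad s f K j = ∑ i ∈ K, s i :=
  sum_fiberwise K f s

theorem sum_sum_filter_eq_sum {M : Type*} [AddCommMonoid M] [Fintype β] (f : ι → β)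
    (K : Finset ι) (q : ι → β → M) : ∑ j, ∑ i ∈ K with f i = j, q i j = ∑ i ∈ K, q i (f i) := by
  rw [← sum_fiberwise K f fun i => q i (f i)]
  exact sum_congr rfl fun j _ => sum_congr rfl fun i hi => by rw [(mem_filter.1 hi).2]

variable {s}

theorem binLoad_mono (hs : ∀ i, 0 ≤ s i) (f : ι → β) {K K' : Finset ι} (hK : K ⊆ K') (j : β) :
    binLoad s f K j ≤ binLoad s f K' j :=
  sum_le_sum_of_subset_of_nonneg (filter_subset_filter _ hK) fun i _ _ => hs i

theorem binLoad_nonneg (hs : ∀ i, 0 ≤ s i) (f : ι → β) (K : Finset ι) (j : β) :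
    0 ≤ binLoad s f K j :=
  sum_nonneg fun i _ => hs i

theorem binLoad_eq_zero {f : ι → β} {K : Finset ι} {j : β} (h : ∀ i ∈ K, f i ≠ j) :
    binLoad s f K j = 0 := by
  rw [binLoad, filter_false_of_mem h, sum_empty]

theorem binLoad_congr {f g : ι → β} {K : Finset ι} (hfg : ∀ i ∈ K, f i = g i) (j : β) :
    binLoad s f K j = binLoad s g K j := by
  rw [binLoad, binLoad, filter_congr fun i hi => by rw [hfg i hi]]

theorem le_binLoad (hs : ∀ i, 0 ≤ s i) {f : ι → β} {K : Finset ι} {a : ι} (ha : a ∈ K) :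
    s a ≤ binLoad s f K (f a) :=
  single_le_sum (fun i _ => hs i) (mem_filter.2 ⟨ha, rfl⟩)

theorem add_le_binLoad (hs : ∀ i, 0 ≤ s i) {f : ι → β} {K : Finset ι} {a b : ι}
    (ha : a ∈ K) (hb : b ∈ K) (hab : a ≠ b) (hf : f a = f b) :
    s a + s b ≤ binLoad s f K (f a) := by
  classical
  rw [← sum_pair hab]
  refine sum_le_sum_of_subset_of_nonneg ?_ fun i _ _ => hs i
  simp [insert_subset_iff, ha, hb, hf]

theorem binLoad_union [DecidableEq ι] {K P : Finset ι} (hKP : Disjoint K P) (f : ι → β) (j : β) :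
    binLoad s f (K ∪ P) j = binLoad s f K j + binLoad s f P j := by
  rw [binLoad, filter_union, sum_union (disjoint_filter_filter hKP)]; rfl

theorem binLoad_erase_add [DecidableEq ι] {K : Finset ι} {x : ι} (hx : x ∈ K) (f : ι → β) :
    binLoad s f (K.erase x) (f x) + s x = binLoad s f K (f x) := by
  rw [binLoad, filter_erase]
  exact sum_erase_add _ _ (mem_filter.2 ⟨hx, rfl⟩)

theorem binLoad_erase_of_notMem [DecidableEq ι] {f : ι → β} {K : Finset ι} {x : ι} {j : β}
    (hx : ¬(x ∈ K ∧ f x = j)) : binLoad s f (K.erase x) j = binLoad s f K j := by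
  rw [binLoad, filter_erase, erase_eq_of_notMem (by simpa using hx)]; rfl

theorem binLoad_update_insert [DecidableEq ι] (f : ι → β) {K : Finset ι} {x : ι} (hx : x ∉ K)
    (j₀ j : β) :
    binLoad s (Function.update f x j₀) (insert x K) j =
      binLoad s f K j + if j₀ = j then s x else 0 := by
  have hK : binLoad s (Function.update f x j₀) K j = binLoad s f K j :=
    binLoad_congr (fun i hi => Function.update_of_ne (ne_of_mem_of_not_mem hi hx) _ _) j
  unfold binLoad at hK ⊢
  rw [filter_insert, Function.update_self]
  split_ifs with hj
  · rw [sum_insert fun h => hx (mem_filter.1 h).1, add_comm, hK]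
  · rw [hK, add_zero]

theorem binLoad_of_injOn {g : ι → β} {P : Finset ι} (hg : Set.InjOn g P) {b : ι} (hb : b ∈ P) :
    binLoad s g P (g b) = s b := by
  have : {i ∈ P | g i = g b} = {b} :=
    eq_singleton_iff_unique_mem.2 ⟨mem_filter.2 ⟨hb, rfl⟩, fun i hi =>
      hg (mem_filter.1 hi).1 hb (mem_filter.1 hi).2⟩
  rw [binLoad, this, sum_singleton]

theorem exists_binLoad_le_half [Fintype β] (f : ι → β) (K : Finset ι)
    (hK : ∑ i ∈ K, s i < Fintype.card β / 2) : ∃ j, binLoad s f K j ≤ 1 / 2 := by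
  by_contra! hlarge
  have := card_nsmul_le_sum univ (binLoad s f K) (1 / 2) fun j _ => (hlarge j).le
  rw [sum_binLoad, card_univ, nsmul_eq_mul] at this
  linarith

end Load

section Extension

variable {ι β : Type*} [DecidableEq ι] [DecidableEq β] {s : ι → ℝ}

theorem exists_extension_of_injOn (f₀ g : ι → β) {K P : Finset ι} (hKP : Disjoint K P)
    (hK : ∀ j, binLoad s f₀ K j ≤ 1) (hg : Set.InjOn g P)
    (hroom : ∀ i ∈ P, binLoad s f₀ K (g i) + s i ≤ 1) :
    ∃ f : ι → β, (∀ i ∈ K, f i = f₀ i) ∧ ∀ j, binLoad s f (K ∪ P) j ≤ 1 := by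
  classical
  set f : ι → β := fun i => if i ∈ P then g i else f₀ i
  have hfK : ∀ i ∈ K, f i = f₀ i := fun i hi => if_neg (disjoint_left.1 hKP hi)
  refine ⟨f, hfK, fun j => ?_⟩
  rw [binLoad_union hKP, binLoad_congr hfK, binLoad_congr fun i hi => if_pos hi]
  by_cases hj : ∃ b ∈ P, g b = j
  · obtain ⟨b, hb, rfl⟩ := hj
    rw [binLoad_of_injOn hg hb]
    exact hroom b hb
  · rw [binLoad_eq_zero fun i hi hgi => hj ⟨i, hi, hgi⟩, add_zero]
    exact hK j

theorem exists_extension_of_le_half [Fintype β] (hs : ∀ i, 0 < s i) (f₀ : ι → β)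
    {K P : Finset ι} (hKP : Disjoint K P) (hK : ∀ j, binLoad s f₀ K j ≤ 1)
    (hP : ∀ i ∈ P, s i ≤ 1 / 2) (hsize : ∑ i ∈ K ∪ P, s i ≤ Fintype.card β / 2) :
    ∃ f : ι → β, (∀ i ∈ K, f i = f₀ i) ∧ ∀ j, binLoad s f (K ∪ P) j ≤ 1 := by
  induction P using Finset.induction_on generalizing K f₀ with
  | empty => exact ⟨f₀, fun _ _ => rfl, by simpa using hK⟩
  | insert x P hxP ih =>
    have hxK : x ∉ K := disjoint_right.1 hKP (mem_insert_self x P)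
    have hKx : s x + ∑ i ∈ K, s i ≤ ∑ i ∈ K ∪ insert x P, s i := by
      rw [← sum_insert hxK]
      exact sum_le_sum_of_subset_of_nonneg (by grind) fun i _ _ => (hs i).le
    obtain ⟨j₀, hj₀⟩ := exists_binLoad_le_half f₀ K (s := s) (by linarith [hs x])
    have hunion : insert x K ∪ P = K ∪ insert x P := by grind
    obtain ⟨f, hf, hload⟩ := ih (Function.update f₀ x j₀)
      (disjoint_insert_left.2 ⟨hxP, disjoint_of_subset_right (subset_insert x P) hKP⟩)
      (fun j => by
        rw [binLoad_update_insert f₀ hxK]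
        split_ifs with hj
        · linarith [hP x (mem_insert_self x P), hj ▸ hj₀]
        · linarith [hK j])
      (fun i hi => hP i (mem_insert_of_mem hi)) (hunion ▸ hsize)
    refine ⟨f, fun i hi => ?_, hunion ▸ hload⟩
    rw [hf i (mem_insert_of_mem hi), Function.update_of_ne (ne_of_mem_of_not_mem hi hxK)]

/-- Items larger than `1 / 2` go to pairwise distinct bins with room for them; the rest are
placed greedily, which never gets stuck because the total size stays below half the capacity. -/
theorem exists_extension [Fintype β] (hs : ∀ i, 0 < s i) (f₀ g : ι → β) {K I : Finset ι}
    (hKI : K ⊆ I) (hK : ∀ j, binLoad s f₀ K j ≤ 1) (hsize : ∑ i ∈ I, s i ≤ Fintype.card β / 2)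
    (hg : Set.InjOn g ↑{i ∈ I \ K | 1 / 2 < s i})
    (hroom : ∀ i ∈ I \ K, 1 / 2 < s i → binLoad s f₀ K (g i) + s i ≤ 1) :
    ∃ f : ι → β, (∀ i ∈ K, f i = f₀ i) ∧ ∀ j, binLoad s f I j ≤ 1 := by
  classical
  set L := {i ∈ I \ K | 1 / 2 < s i}
  set M := {i ∈ I \ K | ¬1 / 2 < s i}
  have hKL : Disjoint K L := disjoint_of_subset_right (filter_subset _ _) disjoint_sdiff
  obtain ⟨f₁, hf₁, hload₁⟩ := exists_extension_of_injOn f₀ g hKL hK hg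
    fun i hi => hroom i (mem_filter.1 hi).1 (mem_filter.1 hi).2
  have hI : K ∪ L ∪ M = I := by grind
  obtain ⟨f, hf, hload⟩ := exists_extension_of_le_half hs f₁
    (disjoint_union_left.2 ⟨disjoint_of_subset_right (filter_subset _ _) disjoint_sdiff,
      disjoint_filter_filter_not _ _ _⟩) hload₁
    (fun i hi => le_of_not_gt (mem_filter.1 hi).2) (hI ▸ hsize)
  exact ⟨f, fun i hi => (hf i (mem_union_left _ hi)).trans (hf₁ i hi), hI ▸ hload⟩

end Extension

theorem Finset.exists_injOn_mapsTo_of_card_le {α γ : Type*} [Nonempty γ] {A : Finset α}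
    {B : Finset γ} (h : #A ≤ #B) : ∃ f : α → γ, Set.InjOn f A ∧ ∀ a ∈ A, f a ∈ B := by
  obtain ⟨f, hmaps, hinj⟩ := A.finite_toSet.exists_injOn_of_encard_le (t := (B : Set γ))
    (by simpa only [Set.encard_coe_eq_coe_finsetCard] using Nat.cast_le.2 h)
  exact ⟨f, hinj, fun a ha => hmaps ha⟩

theorem two_mul_card_add_card_le {β : Type*} [Fintype β] [DecidableEq β] (w : β → ℝ)
    (hw : ∀ j, 0 ≤ w j) (hsum : ∑ j, w j ≤ Fintype.card β / 2) {S B T : Finset β} {δ : β → β}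
    (hSB : Disjoint S B) (hTS : T ⊆ S) (hδ : Set.InjOn δ T) (hδT : ∀ j ∈ T, δ j ∉ S ∪ B)
    (hS : ∀ j ∈ S, 1 ≤ w j) (hB : ∀ j ∈ B, 1 / 2 ≤ w j)
    (hT : ∀ j ∈ T, 3 / 2 ≤ w j + w (δ j)) :
    2 * #S + #T + #B ≤ Fintype.card β := by
  have hdisj : Disjoint (S ∪ B) (T.image δ) := by
    simp only [disjoint_right, mem_image]
    rintro _ ⟨j, hj, rfl⟩
    exact hδT j hj
  have hle : ∑ j ∈ S ∪ B ∪ T.image δ, w j ≤ ∑ j, w j := sum_le_univ_sum_of_nonneg hw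
  rw [sum_union hdisj, sum_union hSB, sum_image hδ, ← sum_sdiff hTS] at hle
  have hST : (#(S \ T) : ℝ) ≤ ∑ j ∈ S \ T, w j := by
    simpa using card_nsmul_le_sum (S \ T) w 1 fun j hj => hS j (mem_sdiff.1 hj).1
  have hT' : #T * (3 / 2 : ℝ) ≤ ∑ j ∈ T, w j + ∑ j ∈ T, w (δ j) := by
    simpa [sum_add_distrib] using card_nsmul_le_sum T (fun j => w j + w (δ j)) _ hT
  have hB' : #B * (1 / 2 : ℝ) ≤ ∑ j ∈ B, w j := by
    simpa using card_nsmul_le_sum B w _ hB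
  have hcard : (#(S \ T) : ℝ) + #T = #S := by exact_mod_cast card_sdiff_add_card_eq_card hTS
  have : (2 * #S + #T + #B : ℝ) ≤ Fintype.card β := by linarith
  exact_mod_cast this

noncomputable section Filling

variable {ι β : Type*} [DecidableEq β] [Fintype β] (s : ι → ℝ) (h : ι → β) (I : Finset ι)

def overfullBins : Finset β := {j | 1 < binLoad s h I j}

def heavyBins : Finset β := {j | binLoad s h I j ≤ 1 ∧ ∃ i ∈ I, h i = j ∧ 1 / 2 < s i}

def lightBins : Finset β := (overfullBins s h I ∪ heavyBins s h I)ᶜ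

def IsLargestInOverfull (u : β → ι) : Prop :=
  ∀ j ∈ overfullBins s h I, u j ∈ I ∧ h (u j) = j ∧ ∀ i ∈ I, h i = j → s i ≤ s (u j)

variable {s h I}

theorem mem_overfullBins {j : β} : j ∈ overfullBins s h I ↔ 1 < binLoad s h I j := by
  simp [overfullBins]

theorem mem_lightBins {j : β} :
    j ∈ lightBins s h I ↔ binLoad s h I j ≤ 1 ∧ ∀ i ∈ I, h i = j → s i ≤ 1 / 2 := by
  simp only [lightBins, overfullBins, heavyBins, mem_compl, mem_union, mem_filter, mem_univ,
    true_and, not_or, not_lt, not_and, not_exists]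
  tauto

theorem disjoint_overfullBins_heavyBins : Disjoint (overfullBins s h I) (heavyBins s h I) := by
  simp only [disjoint_left, overfullBins, heavyBins, mem_filter, mem_univ, true_and]
  exact fun j hj hj' => (hj.trans_le hj'.1).false

theorem card_overfullBins_add_card_heavyBins_add_card_lightBins :
    #(overfullBins s h I) + #(heavyBins s h I) + #(lightBins s h I) = Fintype.card β := by
  rw [lightBins, card_compl, ← card_union_of_disjoint disjoint_overfullBins_heavyBins]
  have := card_le_univ (overfullBins s h I ∪ heavyBins s h I)
  omega

theorem exists_mem_of_mem_overfullBins {j : β} (hj : j ∈ overfullBins s h I) :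
    ∃ i ∈ I, h i = j := by
  by_contra! hne
  rw [mem_overfullBins, binLoad_eq_zero hne] at hj
  linarith

theorem exists_isLargestInOverfull [Nonempty ι] :
    ∃ u : β → ι, IsLargestInOverfull s h I u := by
  have hmax : ∀ j ∈ overfullBins s h I,
      ∃ u ∈ I, h u = j ∧ ∀ i ∈ I, h i = j → s i ≤ s u := by
    intro j hj
    obtain ⟨i, hi, hij⟩ := exists_mem_of_mem_overfullBins hj
    obtain ⟨u, hu, hmax⟩ := exists_max_image {i ∈ I | h i = j} s ⟨i, mem_filter.2 ⟨hi, hij⟩⟩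
    exact ⟨u, (mem_filter.1 hu).1, (mem_filter.1 hu).2,
      fun i hi hij => hmax i (mem_filter.2 ⟨hi, hij⟩)⟩
  choose! u hu using hmax
  exact ⟨u, hu⟩

theorem binLoad_erase_le_one [DecidableEq ι]
    (halmost : ∀ j, binLoad s h I j ≤ 1 ∨ ∃ x, binLoad s h (I.erase x) j ≤ 1) {u : β → ι}
    (hu : IsLargestInOverfull s h I u) {j : β} (hj : j ∈ overfullBins s h I) :
    binLoad s h (I.erase (u j)) j ≤ 1 := by
  obtain ⟨huI, hhome, hmax⟩ := hu j hj
  rw [mem_overfullBins] at hj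
  rcases halmost j with hle | ⟨x, hx⟩
  · linarith
  by_cases hxj : x ∈ I ∧ h x = j
  · have hx' := binLoad_erase_add (s := s) hxj.1 h
    have hu' := binLoad_erase_add (s := s) huI h
    rw [hxj.2] at hx'
    rw [hhome] at hu'
    linarith [hmax x hxj.1 hxj.2]
  · rw [binLoad_erase_of_notMem hxj] at hx
    linarith

theorem notMem_overfullBins_of_mem_lightBins {j : β} (hj : j ∈ lightBins s h I) :
    j ∉ overfullBins s h I :=
  fun hj' => (mem_overfullBins.1 hj').not_ge (mem_lightBins.1 hj).1

theorem eq_of_ne_largest_of_half_lt [DecidableEq ι] (hs : ∀ i, 0 ≤ s i) {u : β → ι}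
    (hrest : ∀ j ∈ overfullBins s h I, binLoad s h (I.erase (u j)) j ≤ 1) {a b : ι}
    (ha : a ∈ I) (hb : b ∈ I) (hab : h a = h b) (hS : h a ∈ overfullBins s h I)
    (hau : a ≠ u (h a)) (hbu : b ≠ u (h b)) (hsa : 1 / 2 < s a) (hsb : 1 / 2 < s b) : a = b := by
  by_contra hne
  have := add_le_binLoad hs (mem_erase.2 ⟨hau, ha⟩) (mem_erase.2 ⟨by rwa [hab], hb⟩) hne hab
  linarith [hrest _ hS]

/-- A bin `j ∈ T` holds `u j` and `r`, and `δ j` holds more than `1 - s r`, so together they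
weigh more than `1 + s (u j) ≥ 3 / 2`. -/
theorem card_overfullBins_add_card_le (hs : ∀ i, 0 ≤ s i)
    (hsize : ∑ i ∈ I, s i ≤ Fintype.card β / 2) {u : β → ι} (hu : IsLargestInOverfull s h I u)
    {T : Finset β} {δ : β → β} (hTS : T ⊆ overfullBins s h I) (hδ : Set.InjOn δ T)
    (hδT : ∀ j ∈ T, δ j ∈ lightBins s h I)
    (hT : ∀ j ∈ T, ∃ r ∈ I, h r = j ∧ r ≠ u j ∧ 1 / 2 < s r ∧ 1 < binLoad s h I (δ j) + s r) :
    #(overfullBins s h I) + #T ≤ #(lightBins s h I) := by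
  have := two_mul_card_add_card_le (binLoad s h I) (binLoad_nonneg hs h I)
    (by rwa [sum_binLoad]) disjoint_overfullBins_heavyBins hTS hδ
    (fun j hj => mem_compl.1 (hδT j hj))
    (fun j hj => (mem_overfullBins.1 hj).le)
    (fun j hj => by
      obtain ⟨-, i, hi, rfl, hsi⟩ := (mem_filter.1 hj).2
      linarith [le_binLoad (f := h) hs hi])
    (fun j hj => by
      obtain ⟨r, hr, rfl, hru, hsr, hroom⟩ := hT j hj
      obtain ⟨huI, hhome, hmax⟩ := hu (h r) (hTS hj)
      have hpair := add_le_binLoad hs huI hr (Ne.symm hru) hhome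
      rw [hhome] at hpair
      linarith [hmax r hr rfl])
  have := card_overfullBins_add_card_heavyBins_add_card_lightBins (s := s) (h := h) (I := I)
  omega

theorem exists_feasible_keeping_largest [DecidableEq ι] (hs : ∀ i, 0 < s i ∧ s i ≤ 1)
    (hsize : ∑ i ∈ I, s i ≤ Fintype.card β / 2) {u : β → ι}
    (hrest : ∀ j ∈ overfullBins s h I, binLoad s h (I.erase (u j)) j ≤ 1)
    {D : Finset β} (hD : D ⊆ lightBins s h I) {δ : β → β}
    (hδ : Set.InjOn δ (overfullBins s h I))
    (hroom : ∀ i ∈ I, h i ∈ overfullBins s h I → i ≠ u (h i) → 1 / 2 < s i → δ (h i) ∉ D →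
      binLoad s h I (δ (h i)) + s i ≤ 1) :
    ∃ f : ι → β, (∀ j, binLoad s f I j ≤ 1) ∧ ∀ i ∈ I,
      (h i ∈ overfullBins s h I ∧ i = u (h i)) ∨ (h i ∉ overfullBins s h I ∧ h i ∉ D) →
        f i = h i := by
  classical
  set S := overfullBins s h I
  set K := {i ∈ I | (h i ∈ S ∧ i = u (h i)) ∨ (h i ∉ S ∧ h i ∉ D)}
  have hnonneg : ∀ i, 0 ≤ s i := fun i => (hs i).1.le
  have hrescued : ∀ i ∈ I \ K, 1 / 2 < s i → h i ∈ S ∧ i ≠ u (h i) := by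
    intro i hi hbig
    obtain ⟨hiI, hiK⟩ := mem_sdiff.1 hi
    by_cases hiS : h i ∈ S
    · exact ⟨hiS, fun hiu => hiK (mem_filter.2 ⟨hiI, Or.inl ⟨hiS, hiu⟩⟩)⟩
    · have hiD : h i ∈ D := by_contra fun hiD => hiK (mem_filter.2 ⟨hiI, Or.inr ⟨hiS, hiD⟩⟩)
      linarith [(mem_lightBins.1 (hD hiD)).2 i hiI rfl]
  have hK : ∀ j, binLoad s h K j ≤ 1 := by
    intro j
    by_cases hj : j ∈ S
    · calc binLoad s h K j ≤ ∑ i ∈ {u j}, s i := by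
            refine sum_le_sum_of_subset_of_nonneg (fun i hi => ?_) fun i _ _ => hnonneg i
            obtain ⟨hiK, rfl⟩ := mem_filter.1 hi
            rcases (mem_filter.1 hiK).2 with ⟨-, hiu⟩ | ⟨hiS, -⟩
            · exact mem_singleton.2 hiu
            · exact absurd hj hiS
        _ ≤ 1 := by simpa using (hs (u j)).2
    · exact (binLoad_mono hnonneg h (filter_subset _ I) j).trans (not_lt.1 (mt mem_overfullBins.2 hj))
  have hinj : Set.InjOn (δ ∘ h) ↑{i ∈ I \ K | 1 / 2 < s i} := by
    intro a ha b hb hab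
    obtain ⟨haS, hau⟩ := hrescued a (mem_filter.1 ha).1 (mem_filter.1 ha).2
    obtain ⟨hbS, hbu⟩ := hrescued b (mem_filter.1 hb).1 (mem_filter.1 hb).2
    exact eq_of_ne_largest_of_half_lt hnonneg hrest (mem_sdiff.1 (mem_filter.1 ha).1).1
      (mem_sdiff.1 (mem_filter.1 hb).1).1 (hδ haS hbS hab) haS hau hbu
      (mem_filter.1 ha).2 (mem_filter.1 hb).2
  have hroomK : ∀ i ∈ I \ K, 1 / 2 < s i → binLoad s h K (δ (h i)) + s i ≤ 1 := by
    intro i hi hbig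
    obtain ⟨hiS, hiu⟩ := hrescued i hi hbig
    by_cases hδD : δ (h i) ∈ D
    · rw [binLoad_eq_zero fun k hk hkδ => ?_]
      · linarith [(hs i).2]
      rcases (mem_filter.1 hk).2 with ⟨hkS, -⟩ | ⟨-, hkD⟩
      · exact notMem_overfullBins_of_mem_lightBins (hD hδD) (hkδ ▸ hkS)
      · exact hkD (hkδ ▸ hδD)
    · linarith [binLoad_mono hnonneg h (filter_subset _ I : K ⊆ I) (δ (h i)),
        hroom i (mem_sdiff.1 hi).1 hiS hiu hbig hδD]
  obtain ⟨f, hf, hload⟩ :=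
    exists_extension (fun i => (hs i).1) h (δ ∘ h) (filter_subset _ I : K ⊆ I) hK hsize hinj hroomK
  exact ⟨f, hload, fun i hi hc => hf i (mem_filter.2 ⟨hi, hc⟩)⟩

theorem exists_feasible_keeping_rest [DecidableEq ι] (hs : ∀ i, 0 < s i ∧ s i ≤ 1)
    (hsize : ∑ i ∈ I, s i ≤ Fintype.card β / 2) {u : β → ι}
    (hrest : ∀ j ∈ overfullBins s h I, binLoad s h (I.erase (u j)) j ≤ 1)
    {D : Finset β} (hD : D ⊆ lightBins s h I) {γ : β → β}
    (hγ : Set.InjOn γ (overfullBins s h I))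
    (hγD : ∀ j ∈ overfullBins s h I, γ j ∈ lightBins s h I \ D) :
    ∃ f : ι → β, (∀ j, binLoad s f I j ≤ 1) ∧ ∀ i ∈ I,
      (h i ∈ overfullBins s h I ∧ i ≠ u (h i)) ∨ h i ∈ D → f i = h i := by
  classical
  set S := overfullBins s h I
  set K := {i ∈ I | (h i ∈ S ∧ i ≠ u (h i)) ∨ h i ∈ D ∨ (h i ∉ S ∧ 1 / 2 < s i)}
  have hnonneg : ∀ i, 0 ≤ s i := fun i => (hs i).1.le
  have hlargest : ∀ i ∈ I \ K, 1 / 2 < s i → h i ∈ S ∧ i = u (h i) := by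
    intro i hi hbig
    obtain ⟨hiI, hiK⟩ := mem_sdiff.1 hi
    have hiS : h i ∈ S :=
      by_contra fun hiS => hiK (mem_filter.2 ⟨hiI, Or.inr (Or.inr ⟨hiS, hbig⟩)⟩)
    exact ⟨hiS, by_contra fun hiu => hiK (mem_filter.2 ⟨hiI, Or.inl ⟨hiS, hiu⟩⟩)⟩
  have hK : ∀ j, binLoad s h K j ≤ 1 := by
    intro j
    by_cases hj : j ∈ S
    · refine le_trans (sum_le_sum_of_subset_of_nonneg (fun i hi => ?_) fun i _ _ => hnonneg i)
        (hrest j hj)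
      obtain ⟨hiK, rfl⟩ := mem_filter.1 hi
      refine mem_filter.2 ⟨mem_erase.2 ⟨?_, (mem_filter.1 hiK).1⟩, rfl⟩
      rcases (mem_filter.1 hiK).2 with ⟨-, hiu⟩ | hiD | ⟨hiS, -⟩
      · exact hiu
      · exact absurd hj (notMem_overfullBins_of_mem_lightBins (hD hiD))
      · exact absurd hj hiS
    · exact (binLoad_mono hnonneg h (filter_subset _ I) j).trans (not_lt.1 (mt mem_overfullBins.2 hj))
  have hinj : Set.InjOn (γ ∘ h) ↑{i ∈ I \ K | 1 / 2 < s i} := by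
    intro a ha b hb hab
    obtain ⟨haS, hau⟩ := hlargest a (mem_filter.1 ha).1 (mem_filter.1 ha).2
    obtain ⟨hbS, hbu⟩ := hlargest b (mem_filter.1 hb).1 (mem_filter.1 hb).2
    rw [hau, hbu, hγ haS hbS hab]
  have hroomK : ∀ i ∈ I \ K, 1 / 2 < s i → binLoad s h K (γ (h i)) + s i ≤ 1 := by
    intro i hi hbig
    obtain ⟨hlight, hγD⟩ := mem_sdiff.1 (hγD (h i) (hlargest i hi hbig).1)
    rw [binLoad_eq_zero fun k hk hkγ => ?_]
    · linarith [(hs i).2]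
    rcases (mem_filter.1 hk).2 with ⟨hkS, -⟩ | hkD | ⟨-, hkbig⟩
    · exact notMem_overfullBins_of_mem_lightBins hlight (hkγ ▸ hkS)
    · exact hγD (hkγ ▸ hkD)
    · linarith [(mem_lightBins.1 hlight).2 k (mem_filter.1 hk).1 hkγ]
  obtain ⟨f, hf, hload⟩ :=
    exists_extension (fun i => (hs i).1) h (γ ∘ h) (filter_subset _ I : K ⊆ I) hK hsize hinj hroomK
  exact ⟨f, hload, fun i hi hc => hf i (mem_filter.2 ⟨hi, Or.imp_right Or.inl hc⟩)⟩
theorem exists_feasible_pair_covering [DecidableEq ι] (hs : ∀ i, 0 < s i ∧ s i ≤ 1)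
    (halmost : ∀ j, binLoad s h I j ≤ 1 ∨ ∃ x, binLoad s h (I.erase x) j ≤ 1)
    (hsize : ∑ i ∈ I, s i ≤ Fintype.card β / 2) :
    ∃ f₁ f₂ : ι → β, (∀ j, binLoad s f₁ I j ≤ 1) ∧ (∀ j, binLoad s f₂ I j ≤ 1) ∧
      ∀ i ∈ I, f₁ i = h i ∨ f₂ i = h i := by
  classical
  set S := overfullBins s h I
  have hnonneg : ∀ i, 0 ≤ s i := fun i => (hs i).1.le
  rcases S.eq_empty_or_nonempty with hS | ⟨j₀, hj₀⟩
  · have hfit : ∀ j, binLoad s h I j ≤ 1 := fun j =>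
      not_lt.1 fun hj => (eq_empty_iff_forall_notMem.1 hS) j (mem_overfullBins.2 hj)
    exact ⟨h, h, hfit, hfit, fun _ _ => Or.inl rfl⟩
  obtain ⟨i₀, -⟩ := exists_mem_of_mem_overfullBins hj₀
  have : Nonempty ι := ⟨i₀⟩
  have : Nonempty β := ⟨j₀⟩
  obtain ⟨u, hu⟩ := exists_isLargestInOverfull (s := s) (h := h) (I := I)
  have hrest := fun j (hj : j ∈ S) => binLoad_erase_le_one halmost hu hj
  obtain ⟨δ, hδ, hδE⟩ := exists_injOn_mapsTo_of_card_le (A := S) (B := lightBins s h I) (by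
    simpa using card_overfullBins_add_card_le hnonneg hsize hu (T := ∅) (δ := id)
      (empty_subset _) (by simp) (by simp) (by simp))
  set T := {j ∈ S | ∃ r ∈ I, h r = j ∧ r ≠ u j ∧ 1 / 2 < s r ∧ 1 < binLoad s h I (δ j) + s r}
  have hTS : T ⊆ S := filter_subset _ _
  set D := T.image δ
  have hD : D ⊆ lightBins s h I := by
    intro j hj
    obtain ⟨k, hk, rfl⟩ := mem_image.1 hj
    exact hδE k (hTS hk)
  have hcard : #S + #T ≤ #(lightBins s h I) := card_overfullBins_add_card_le hnonneg hsize hu hTS (hδ.mono hTS)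
    (fun j hj => hδE j (hTS hj)) (fun j hj => (mem_filter.1 hj).2)
  obtain ⟨γ, hγ, hγE⟩ := exists_injOn_mapsTo_of_card_le (A := S) (B := lightBins s h I \ D) (by
    rw [card_sdiff_of_subset hD, card_image_of_injOn (hδ.mono hTS)]
    omega)
  obtain ⟨f₁, hf₁, hf₁h⟩ := exists_feasible_keeping_rest hs hsize hrest hD hγ hγE
  obtain ⟨f₂, hf₂, hf₂h⟩ := exists_feasible_keeping_largest hs hsize hrest hD hδ
    fun i hi hiS hiu hbig hδD => not_lt.1 fun hlt =>
      hδD (mem_image_of_mem δ (mem_filter.2 ⟨hiS, i, hi, rfl, hiu, hbig, hlt⟩))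
  refine ⟨f₁, f₂, hf₁, hf₂, fun i hi => ?_⟩
  by_cases hiS : h i ∈ S
  · by_cases hiu : i = u (h i)
    · exact Or.inr (hf₂h i hi (Or.inl ⟨hiS, hiu⟩))
    · exact Or.inl (hf₁h i hi (Or.inl ⟨hiS, hiu⟩))
  · by_cases hiD : h i ∈ D
    · exact Or.inl (hf₁h i hi (Or.inr hiD))
    · exact Or.inr (hf₂h i hi (Or.inr ⟨hiS, hiD⟩))

theorem exists_feasible_half_profit [DecidableEq ι] (hs : ∀ i, 0 < s i ∧ s i ≤ 1)
    (p : ι → β → ℝ) (hp : ∀ i j, 0 ≤ p i j)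
    (halmost : ∀ j, binLoad s h I j ≤ 1 ∨ ∃ x, binLoad s h (I.erase x) j ≤ 1)
    (hsize : ∑ i ∈ I, s i ≤ Fintype.card β / 2) :
    ∃ f : ι → β, (∀ j, binLoad s f I j ≤ 1) ∧
      1 / 2 * ∑ i ∈ I, p i (h i) ≤ ∑ i ∈ I, p i (f i) := by
  obtain ⟨f₁, f₂, hf₁, hf₂, hcover⟩ := exists_feasible_pair_covering hs halmost hsize
  have hsplit : ∑ i ∈ I, p i (h i) ≤ ∑ i ∈ I, p i (f₁ i) + ∑ i ∈ I, p i (f₂ i) := by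
    rw [← sum_add_distrib]
    refine sum_le_sum fun i hi => ?_
    rcases hcover i hi with e | e <;> rw [← e] <;> linarith [hp i (f₁ i), hp i (f₂ i)]
  rcases le_total (∑ i ∈ I, p i (f₁ i)) (∑ i ∈ I, p i (f₂ i)) with hle | hle
  · exact ⟨f₂, hf₂, by linarith⟩
  · exact ⟨f₁, hf₁, by linarith⟩

end Filling

theorem exists_home {ι β : Type*} [Nonempty β] (U : β → Finset ι)
    (hdisj : ∀ j k, j ≠ k → Disjoint (U j) (U k)) : ∃ h : ι → β, ∀ j, ∀ i ∈ U j, h i = j := by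
  classical
  refine ⟨fun i => if hi : ∃ j, i ∈ U j then hi.choose else Classical.arbitrary β,
    fun j i hij => ?_⟩
  have hex : ∃ j, i ∈ U j := ⟨j, hij⟩
  dsimp only
  rw [dif_pos hex]
  by_contra hne
  exact disjoint_left.1 (hdisj _ _ hne) hex.choose_spec hij

/-- Filling phase: an almost feasible assignment whose items have total size
at most `m/2` can be converted into a feasible assignment of the same items
with at least half the profit. -/
theorem almost_feasible_to_feasible
    (n m : ℕ) (s : Fin n → ℝ) (hs : ∀ i, 0 < s i ∧ s i ≤ 1)
    (p : Fin n → Fin m → ℝ) (hp : ∀ i j, 0 ≤ p i j)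
    (U : Fin m → Finset (Fin n))
    (hdisj : ∀ j k, j ≠ k → Disjoint (U j) (U k))
    (halmost : ∀ j, (∑ i ∈ U j, s i) ≤ 1 ∨
      ∃ u ∈ U j, (∑ i ∈ (U j).erase u, s i) ≤ 1)
    (hsize : (∑ i ∈ Finset.univ.biUnion U, s i) ≤ (m : ℝ) / 2) :
    ∃ U' : Fin m → Finset (Fin n),
      (∀ j k, j ≠ k → Disjoint (U' j) (U' k)) ∧
      (∀ j, (∑ i ∈ U' j, s i) ≤ 1) ∧
      Finset.univ.biUnion U' = Finset.univ.biUnion U ∧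
      (1 / 2) * (∑ j, ∑ i ∈ U j, p i j) ≤ ∑ j, ∑ i ∈ U' j, p i j := by
  rcases isEmpty_or_nonempty (Fin m) with hm | hm
  · exact ⟨U, hdisj, isEmptyElim, rfl, by simp⟩
  obtain ⟨h, hh⟩ := exists_home U hdisj
  set I := univ.biUnion U
  have hU : U = fun j => {i ∈ I | h i = j} := by
    ext j i
    refine ⟨fun hij => mem_filter.2 ⟨mem_biUnion.2 ⟨j, mem_univ j, hij⟩, hh j i hij⟩, ?_⟩
    rintro hi
    obtain ⟨k, -, hik⟩ := mem_biUnion.1 (mem_filter.1 hi).1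
    exact (mem_filter.1 hi).2 ▸ hh k i hik ▸ hik
  clear_value I
  subst hU
  obtain ⟨f, hf, hprofit⟩ := exists_feasible_half_profit hs p hp
    (fun j => (halmost j).imp id fun ⟨x, _, hx⟩ => ⟨x, by rwa [binLoad, filter_erase]⟩)
    (by simpa using hsize)
  refine ⟨fun j => {i ∈ I | f i = j}, fun j k hjk => disjoint_filter.2 fun i _ hij hik =>
    hjk (hij ▸ hik), hf, by ext; simp, ?_⟩
  rwa [sum_sum_filter_eq_sum, sum_sum_filter_eq_sum]
end

section
/- Consider a Group GAP instance: a finite set I of items partitioned into groups G_1,...,G_L, where each item i has a rational size s_i with 0 < s_i ≤ 1 and a profit p_{i,j} ≥ 0 when assigned to bin j ∈ {1,...,m}, the bins having unit capacity, and where every group satisfies Σ_{i∈G_ℓ} s_i ≤ m/2. Let OPT be the maximum, over feasible assignments U = (U_1,...,U_m) (pairwise-disjoint bin contents with Σ_{i∈U_j} s_i ≤ 1 for all j), of the total profit Σ_j Σ_{i∈U_j∩I(𝒢_s)} p_{i,j} collected from items belonging to satisfied groups, where a group is satisfied if all its items are assigned. Then there exist a subfamily 𝒢* of groups with Σ_{G_ℓ∈𝒢*}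 Σ_{i∈G_ℓ} s_i ≤ m/2 and a feasible assignment that assigns exactly the items of the groups in 𝒢* and whose total profit is at least OPT/6. -/
/-! Let `U` be an optimal assignment. The groups it satisfies are packed into the `m` bins, so
their total size is at most `m`, while each of them has size at most `m / 2`. Such a family splits
into three subfamilies of total size at most `m / 2` each: adding groups one at a time until the
size first exceeds `m / 2` yields a subfamily `A` and a last group `a` such that `A \ {a}`, `{a}`
and the complement of `A` will do. One of the three collects at least a third of the profit of
`U`, and restricting `U` to its items gives the required assignment. -/

open Finset Function

namespace Finset

variable {α : Type*} [DecidableEq α]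

theorem exists_sum_erase_le_lt_sum {S : Finset α} {w : α → ℝ} {C : ℝ} (hC : 0 ≤ C)
    (hS : C < ∑ a ∈ S, w a) :
    ∃ A ⊆ S, ∃ a ∈ A, ∑ b ∈ A.erase a, w b ≤ C ∧ C < ∑ b ∈ A, w b := by
  induction S using Finset.induction_on with
  | empty => simp only [sum_empty] at hS; linarith
  | insert b S hb ih =>
    by_cases hSC : C < ∑ a ∈ S, w a
    · obtain ⟨A, hAS, a, ha, hle, hlt⟩ := ih hSC
      exact ⟨A, hAS.trans (subset_insert b S), a, ha, hle, hlt⟩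
    · exact ⟨insert b S, Subset.rfl, b, mem_insert_self b S,
        by rwa [erase_insert hb, ← not_lt], hS⟩

theorem exists_subset_sum_le_and_sum_le_three_mul {S : Finset α} {w : α → ℝ} {C : ℝ}
    (hC : 0 ≤ C) (hwC : ∀ a ∈ S, w a ≤ C) (hS : ∑ a ∈ S, w a ≤ 2 * C) (q : α → ℝ) :
    ∃ B ⊆ S, ∑ a ∈ B, w a ≤ C ∧ ∑ a ∈ S, q a ≤ 3 * ∑ a ∈ B, q a := by
  by_cases hSC : ∑ a ∈ S, w a ≤ C
  · by_cases hq : 0 ≤ ∑ a ∈ S, q a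
    · exact ⟨S, Subset.rfl, hSC, by linarith⟩
    · exact ⟨∅, empty_subset S, by simpa using hC, by simp only [sum_empty, mul_zero]; linarith⟩
  obtain ⟨A, hAS, a, ha, hle, hlt⟩ := exists_sum_erase_le_lt_sum hC (not_le.1 hSC)
  have hsplit : ∀ f : α → ℝ,
      ∑ b ∈ S, f b = ∑ b ∈ A.erase a, f b + f a + ∑ b ∈ S \ A, f b := fun f => by
    rw [add_comm _ (f a), add_sum_erase A f ha, sum_sdiff_eq_sub hAS]
    ring
  obtain hq | hq | hq : ∑ b ∈ S, q b ≤ 3 * ∑ b ∈ A.erase a, q b ∨ ∑ b ∈ S, q b ≤ 3 * q a ∨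
      ∑ b ∈ S, q b ≤ 3 * ∑ b ∈ S \ A, q b := by
    by_contra! h
    linarith [hsplit q]
  · exact ⟨A.erase a, (erase_subset a A).trans hAS, hle, hq⟩
  · exact ⟨{a}, singleton_subset_iff.2 (hAS ha), by simpa using hwC a (hAS ha), by simpa using hq⟩
  · exact ⟨S \ A, sdiff_subset, by linarith [hsplit w, add_sum_erase A w ha], hq⟩

end Finset

namespace GroupGAP

variable {ι β γ : Type*}

def IsFeasible (s : ι → ℝ) (U : β → Finset ι) : Prop :=
  (∀ j k, j ≠ k → Disjoint (U j) (U k)) ∧ ∀ j, ∑ i ∈ U j, s i ≤ 1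

theorem pairwise_disjoint_of_existsUnique_mem {G : γ → Finset ι}
    (hG : ∀ i, ∃! ℓ, i ∈ G ℓ) : Pairwise (Disjoint on G) :=
  fun _ _ hne => disjoint_left.2 fun _ h₁ h₂ => hne ((hG _).unique h₁ h₂)

variable [DecidableEq ι] {s : ι → ℝ} {U : β → Finset ι}

theorem IsFeasible.inter (hU : IsFeasible s U) (hs : ∀ i, 0 ≤ s i) (T : Finset ι) :
    IsFeasible s fun j => U j ∩ T :=
  ⟨fun j k hjk => (hU.1 j k hjk).mono inter_subset_left inter_subset_left,
    fun j => (sum_le_sum_of_subset_of_nonneg inter_subset_left fun i _ _ => hs i).trans (hU.2 j)⟩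

variable [Fintype β]

theorem IsFeasible.sum_biUnion_le_card (hU : IsFeasible s U) :
    ∑ i ∈ univ.biUnion U, s i ≤ Fintype.card β := by
  rw [sum_biUnion fun j _ k _ => hU.1 j k]
  simpa using sum_le_card_nsmul univ _ 1 fun j _ => hU.2 j

variable {G : γ → Finset ι}

theorem sum_sum_inter_biUnion (hG : Pairwise (Disjoint on G)) (B : Finset γ) (p : ι → β → ℝ) :
    ∑ j, ∑ i ∈ U j ∩ B.biUnion G, p i j = ∑ ℓ ∈ B, ∑ j, ∑ i ∈ U j ∩ G ℓ, p i j := by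
  rw [sum_comm]
  refine sum_congr rfl fun j _ => ?_
  rw [inter_biUnion, sum_biUnion fun ℓ₁ _ ℓ₂ _ hne =>
    (hG hne).mono inter_subset_right inter_subset_right]

variable [Fintype γ]

def satisfied (G : γ → Finset ι) (U : β → Finset ι) : Finset γ :=
  {ℓ | G ℓ ⊆ univ.biUnion U}

theorem biUnion_satisfied_subset : (satisfied G U).biUnion G ⊆ univ.biUnion U :=
  biUnion_subset.2 fun _ hℓ => by simpa [satisfied] using hℓ

theorem IsFeasible.sum_satisfied_le_card (hU : IsFeasible s U) (hs : ∀ i, 0 ≤ s i)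
    (hG : Pairwise (Disjoint on G)) :
    ∑ ℓ ∈ satisfied G U, ∑ i ∈ G ℓ, s i ≤ Fintype.card β := by
  rw [← sum_biUnion (hG.set_pairwise _)]
  exact (sum_le_sum_of_subset_of_nonneg biUnion_satisfied_subset fun i _ _ => hs i).trans
    hU.sum_biUnion_le_card

/- The decidability instance is a binder so that the lemma rewrites the `if` whichever instance
elaborated it (`Nat.decidableExistsFin` over `Fin L`). -/
theorem sum_sum_ite_satisfied (p : ι → β → ℝ)
    [DecidablePred fun i => ∃ ℓ, i ∈ G ℓ ∧ G ℓ ⊆ univ.biUnion U] :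
    ∑ j, ∑ i ∈ U j, (if ∃ ℓ, i ∈ G ℓ ∧ G ℓ ⊆ univ.biUnion U then p i j else 0) =
      ∑ j, ∑ i ∈ U j ∩ (satisfied G U).biUnion G, p i j := by
  refine sum_congr rfl fun j _ => ?_
  rw [← filter_mem_eq_inter, sum_filter]
  refine sum_congr rfl fun i _ => if_congr ?_ rfl rfl
  simp [satisfied, and_comm]

end GroupGAP

open GroupGAP

theorem group_gap_one_sixth_general
    (n m L : ℕ) (s : Fin n → ℚ) (hs : ∀ i, 0 < s i ∧ s i ≤ 1)
    (p : Fin n → Fin m → ℝ)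
    (G : Fin L → Finset (Fin n))
    (hpart : ∀ i : Fin n, ∃! ℓ : Fin L, i ∈ G ℓ)
    (hgroup : ∀ ℓ : Fin L, (∑ i ∈ G ℓ, (s i : ℝ)) ≤ (m : ℝ) / 2)
    (OPT : ℝ)
    (hOPT : IsGreatest
      { v : ℝ | ∃ U : Fin m → Finset (Fin n),
          (∀ j k, j ≠ k → Disjoint (U j) (U k)) ∧
          (∀ j, (∑ i ∈ U j, (s i : ℝ)) ≤ 1) ∧
          v = ∑ j, ∑ i ∈ U j,
            (if ∃ ℓ : Fin L, i ∈ G ℓ ∧ G ℓ ⊆ Finset.univ.biUnion U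
             then p i j else 0) } OPT) :
    ∃ (Gstar : Finset (Fin L)) (U : Fin m → Finset (Fin n)),
      (∑ ℓ ∈ Gstar, ∑ i ∈ G ℓ, (s i : ℝ)) ≤ (m : ℝ) / 2 ∧
      (∀ j k, j ≠ k → Disjoint (U j) (U k)) ∧
      (∀ j, (∑ i ∈ U j, (s i : ℝ)) ≤ 1) ∧
      Finset.univ.biUnion U = Gstar.biUnion G ∧
      OPT / 6 ≤ ∑ j, ∑ i ∈ U j, p i j := by
  obtain ⟨⟨U, hdisj, hcap, hOPT_eq⟩, hOPT_max⟩ := hOPT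
  have hU : IsFeasible (fun i => (s i : ℝ)) U := ⟨hdisj, hcap⟩
  have hs0 (i : Fin n) : (0 : ℝ) ≤ s i := by exact_mod_cast (hs i).1.le
  have hG := pairwise_disjoint_of_existsUnique_mem hpart
  have hOPT_nonneg : 0 ≤ OPT := hOPT_max ⟨fun _ => ∅, by simp, by simp, by simp⟩
  rw [sum_sum_ite_satisfied, sum_sum_inter_biUnion hG] at hOPT_eq
  obtain ⟨B, hBS, hBsize, hBprofit⟩ := exists_subset_sum_le_and_sum_le_three_mul
    (by positivity) (fun ℓ _ => hgroup ℓ)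
    (by simpa [mul_div_cancel₀] using hU.sum_satisfied_le_card hs0 hG)
    (fun ℓ => ∑ j, ∑ i ∈ U j ∩ G ℓ, p i j)
  obtain ⟨hdisjB, hcapB⟩ := hU.inter hs0 (B.biUnion G)
  refine ⟨B, fun j => U j ∩ B.biUnion G, hBsize, hdisjB, hcapB, ?_, ?_⟩
  · rw [← biUnion_inter, inter_eq_right]
    exact (biUnion_subset_biUnion_of_subset_left G hBS).trans biUnion_satisfied_subset
  · rw [sum_sum_inter_biUnion hG]
    linarith

/-- Main theorem for Group GAP: if every group has total size at most `m/2`,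
there is a family of groups of total size at most `m/2` and a feasible
assignment of exactly their items achieving at least `OPT/6`. -/
theorem group_gap_one_sixth
    (n m L : ℕ) (s : Fin n → ℚ) (hs : ∀ i, 0 < s i ∧ s i ≤ 1)
    (p : Fin n → Fin m → ℝ) (hp : ∀ i j, 0 ≤ p i j)
    (G : Fin L → Finset (Fin n))
    (hpart : ∀ i : Fin n, ∃! ℓ : Fin L, i ∈ G ℓ)
    (hgroup : ∀ ℓ : Fin L, (∑ i ∈ G ℓ, (s i : ℝ)) ≤ (m : ℝ) / 2)
    (OPT : ℝ)
    (hOPT : IsGreatest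
      { v : ℝ | ∃ U : Fin m → Finset (Fin n),
          (∀ j k, j ≠ k → Disjoint (U j) (U k)) ∧
          (∀ j, (∑ i ∈ U j, (s i : ℝ)) ≤ 1) ∧
          v = ∑ j, ∑ i ∈ U j,
            (if ∃ ℓ : Fin L, i ∈ G ℓ ∧ G ℓ ⊆ Finset.univ.biUnion U
             then p i j else 0) } OPT) :
    ∃ (Gstar : Finset (Fin L)) (U : Fin m → Finset (Fin n)),
      (∑ ℓ ∈ Gstar, ∑ i ∈ G ℓ, (s i : ℝ)) ≤ (m : ℝ) / 2 ∧
      (∀ j k, j ≠ k → Disjoint (U j) (U k)) ∧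
      (∀ j, (∑ i ∈ U j, (s i : ℝ)) ≤ 1) ∧
      Finset.univ.biUnion U = Gstar.biUnion G ∧
      OPT / 6 ≤ ∑ j, ∑ i ∈ U j, p i j :=
  group_gap_one_sixth_general n m L s hs p G hpart hgroup OPT hOPT
end

section
/- Let G = (A ∪ B, E) be a complete bipartite graph on finite vertex sets A and B with |B| ≥ |A|, and let W(a,b) ≥ 0 be a non-negative weight for every edge (a,b) ∈ A × B. For S ⊆ A define h(S) to be the maximum total weight of a matching in the subgraph induced by S ∪ B, i.e., h(S) = max over injective functions μ from a subset of S into B of Σ_a W(a, μ(a)). Then h is submodular and monotone: h(S) + h(T) ≥ h(S ∪ T) + h(S ∩ T) for all S, T ⊆ A, and h(S) ≤ h(T) whenever S ⊆ T ⊆ A. -/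
/-!
Take optimal matchings `μ` of `S ∪ T` and `ν` of `S ∩ T`, and let `R` be the set of vertices
reachable from the `μ`-matched vertices outside `S` along alternating paths (a `μ`-edge followed by
the `ν`-edge at the same vertex of `B`). No two edges of `μ` and `ν` at a common vertex of `B` are
separated by `R`, so using `ν` on `R` and `μ` off `R` gives a matching of `S`, using `μ` on `R`
and `ν` off `R` a matching of `T`, and together they have the weight of `μ` and `ν`.
Monotonicity holds because every matching of `S` is one of `T`.
-/

open Finset Relation

section Exchange

variable {A B : Type*} {μ ν : A → B} {U V : Finset A}

theorem exists_alternating_closed_superset (hμ : Set.InjOn μ U) {X : Set A} (hXV : Disjoint X ↑V) :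
    ∃ R : Set A, X ⊆ R ∧ R ⊆ X ∪ ↑V ∧
      ∀ a ∈ U, ∀ a' ∈ V, μ a = ν a' → (a ∈ R ↔ a' ∈ R) := by
  refine ⟨{x | ∃ b ∈ X, ReflTransGen (fun a a' => a ∈ U ∧ a' ∈ V ∧ μ a = ν a') b x},
    fun b hb => ⟨b, hb, .refl⟩, ?_, ?_⟩
  · rintro x ⟨b, hb, hbx⟩
    rcases hbx.cases_tail with rfl | ⟨c, -, -, hx, -⟩
    exacts [Or.inl hb, Or.inr hx]
  · intro a ha a' ha' heq
    constructor
    · rintro ⟨b, hb, hba⟩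
      exact ⟨b, hb, hba.tail ⟨ha, ha', heq⟩⟩
    · rintro ⟨b, hb, hba'⟩
      rcases hba'.cases_tail with rfl | ⟨c, hbc, hc, -, hca'⟩
      · exact absurd ha' (Set.disjoint_left.mp hXV hb)
      · -- `μ` is injective, so the alternating path reaches `a'` through `a` itself
        rw [← hμ ha hc (heq.trans hca'.symm)] at hbc
        exact ⟨b, hb, hbc⟩

variable [DecidableEq A] {R : Set A} [DecidablePred (· ∈ R)]

theorem injOn_piecewise_of_alternating_closed (hμ : Set.InjOn μ U) (hν : Set.InjOn ν V)
    (hR : ∀ a ∈ U, ∀ a' ∈ V, μ a = ν a' → (a ∈ R ↔ a' ∈ R)) :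
    Set.InjOn (R.piecewise ν μ) ↑(V.filter (· ∈ R) ∪ U.filter (· ∉ R)) := by
  intro a ha a' ha' heq
  simp only [coe_union, coe_filter, Set.mem_union, Set.mem_ofPred_eq] at ha ha'
  rcases ha with ⟨haV, haR⟩ | ⟨haU, haR⟩ <;> rcases ha' with ⟨ha'V, ha'R⟩ | ⟨ha'U, ha'R⟩ <;>
    simp only [Set.piecewise, haR, ha'R, if_true, if_false] at heq
  · exact hν haV ha'V heq
  · exact absurd ((hR a' ha'U a haV heq.symm).2 haR) ha'R
  · exact absurd ((hR a haU a' ha'V heq).2 ha'R) haR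
  · exact hμ haU ha'U heq

theorem sum_piecewise_add_sum_piecewise {M : Type*} [AddCommMonoid M] (f : A → B → M) :
    ∑ a ∈ V.filter (· ∈ R) ∪ U.filter (· ∉ R), f a (R.piecewise ν μ a) +
      ∑ a ∈ U.filter (· ∈ R) ∪ V.filter (· ∉ R), f a (R.piecewise μ ν a) =
    ∑ a ∈ U, f a (μ a) + ∑ a ∈ V, f a (ν a) := by
  have on_R (s : Finset A) (g g' : A → B) :
      ∑ a ∈ s.filter (· ∈ R), f a (R.piecewise g g' a) = ∑ a ∈ s.filter (· ∈ R), f a (g a) :=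
    sum_congr rfl fun a ha => by rw [Set.piecewise_eq_of_mem _ _ _ (mem_filter.1 ha).2]
  have off_R (s : Finset A) (g g' : A → B) :
      ∑ a ∈ s.filter (· ∉ R), f a (R.piecewise g g' a) = ∑ a ∈ s.filter (· ∉ R), f a (g' a) :=
    sum_congr rfl fun a ha => by rw [Set.piecewise_eq_of_notMem _ _ _ (mem_filter.1 ha).2]
  rw [sum_union (disjoint_filter_filter_not _ _ _), sum_union (disjoint_filter_filter_not _ _ _),
    on_R, on_R, off_R, off_R, ← sum_filter_add_sum_filter_not U (· ∈ R),
    ← sum_filter_add_sum_filter_not V (· ∈ R)]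
  abel

theorem exists_exchange_union_inter {M : Type*} [AddCommMonoid M] (f : A → B → M) {S T : Finset A}
    (hμ : Set.InjOn μ U) (hν : Set.InjOn ν V) (hUST : U ⊆ S ∪ T) (hVST : V ⊆ S ∩ T) :
    ∃ (P Q : Finset A) (σ τ : A → B), P ⊆ S ∧ Set.InjOn σ P ∧ Q ⊆ T ∧ Set.InjOn τ Q ∧
      ∑ a ∈ P, f a (σ a) + ∑ a ∈ Q, f a (τ a) = ∑ a ∈ U, f a (μ a) + ∑ a ∈ V, f a (ν a) := by
  classical
  have hVS : V ⊆ S := hVST.trans inter_subset_left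
  have hVT : V ⊆ T := hVST.trans inter_subset_right
  obtain ⟨R, hUR, hRV, hR⟩ := exists_alternating_closed_superset (ν := ν) hμ
    (disjoint_coe.2 (disjoint_of_subset_right hVS (sdiff_disjoint (t := U))))
  refine ⟨_, _, _, _, ?_, injOn_piecewise_of_alternating_closed hμ hν hR, ?_,
    injOn_piecewise_of_alternating_closed hν hμ fun a ha a' ha' h => (hR a' ha' a ha h.symm).symm,
    sum_piecewise_add_sum_piecewise f⟩
  · intro a ha
    simp only [mem_union, mem_filter] at ha
    rcases ha with ⟨haV, -⟩ | ⟨haU, haR⟩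
    · exact hVS haV
    · by_contra haS
      exact haR (hUR (by simp [haU, haS]))
  · intro a ha
    simp only [mem_union, mem_filter] at ha
    rcases ha with ⟨haU, haR⟩ | ⟨haV, -⟩
    · rcases hRV haR with haUS | haV
      · exact (mem_union.1 (hUST haU)).resolve_left (mem_sdiff.1 haUS).2
      · exact hVT haV
    · exact hVT haV

end Exchange

theorem partial_max_matching_submodular_general
    {A B : Type*} [DecidableEq A]
    (W : A → B → ℝ)
    (h : Finset A → ℝ)
    (hh : ∀ S : Finset A, IsGreatest
      { v : ℝ | ∃ (T : Finset A) (μ : A → B),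
          T ⊆ S ∧ Set.InjOn μ ↑T ∧ v = ∑ a ∈ T, W a (μ a) } (h S)) :
    (∀ S T : Finset A, h (S ∪ T) + h (S ∩ T) ≤ h S + h T) ∧
    (∀ S T : Finset A, S ⊆ T → h S ≤ h T) := by
  refine ⟨fun S T => ?_, fun S T hST => ?_⟩
  · obtain ⟨⟨U, μ, hU, hμ, hμv⟩, -⟩ := hh (S ∪ T)
    obtain ⟨⟨V, ν, hV, hν, hνv⟩, -⟩ := hh (S ∩ T)
    obtain ⟨P, Q, σ, τ, hPS, hσ, hQT, hτ, hsum⟩ := exists_exchange_union_inter W hμ hν hU hV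
    have hP := (hh S).2 ⟨P, σ, hPS, hσ, rfl⟩
    have hQ := (hh T).2 ⟨Q, τ, hQT, hτ, rfl⟩
    linarith
  · obtain ⟨⟨U, μ, hU, hμ, hμv⟩, -⟩ := hh S
    exact (hh T).2 ⟨U, μ, hU.trans hST, hμ, hμv⟩

/-- The partial maximum weight bipartite matching function is submodular and
monotone. -/
theorem partial_max_matching_submodular
    {A B : Type*} [Fintype A] [Fintype B] [DecidableEq A]
    (hcard : Fintype.card A ≤ Fintype.card B)
    (W : A → B → ℝ) (hW : ∀ a b, 0 ≤ W a b)
    (h : Finset A → ℝ)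
    (hh : ∀ S : Finset A, IsGreatest
      { v : ℝ | ∃ (T : Finset A) (μ : A → B),
          T ⊆ S ∧ Set.InjOn μ ↑T ∧ v = ∑ a ∈ T, W a (μ a) } (h S)) :
    (∀ S T : Finset A, h (S ∪ T) + h (S ∩ T) ≤ h S + h T) ∧
    (∀ S T : Finset A, S ⊆ T → h S ≤ h T) :=
  partial_max_matching_submodular_general W h hh
end

section
/- For real numbers p_A, p_B, S_A, S_B define h(p_A, p_B, S_A, S_B) = p_A + (1 − p_A − p_B)·(1 − exp(−(1/2 − S_A)/(1 − S_A − S_B))) − (p_A + p_B)/6. Then for all real p_1, p_2, S_1, S_2 with 0 ≤ p_1 ≤ 1/3, 0 ≤ p_2 ≤ 1/3, 0 ≤ S_1 ≤ 1/2, 0 ≤ S_2 ≤ 1/2, and S_1 + S_2 < 1, it holds that max( h(p_1, p_2, S_1, S_2), h(p_2, p_1, S_2, S_1) ) ≥ 1/3. -/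
/-!
Write `a` and `b` for the two exponentials. Their exponents sum to `-1`, so `a * b = e⁻¹`, and
each exponent is at least `-1`, so `a, b ≥ e⁻¹ > 1/6`. Each value of `h` is affine in `(p₁, p₂)`;
its minimum over the square `[0, 1/3]²` shows that one value alone is at least `1/3` as soon as its
exponential is at most `5/12`. If both exponentials exceed `5/12`, then `a * b = e⁻¹ < 55/144`
forces `a + b < 4/3`, and then the two values sum to at least `2/3`.
-/

open Real

lemma third_le_of_le_five_twelfths {p q a : ℝ} (hp : 0 ≤ p) (hq : q ≤ 1 / 3)
    (ha : 1 / 6 ≤ a) (ha' : a ≤ 5 / 12) :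
    1 / 3 ≤ p + (1 - p - q) * (1 - a) - (p + q) / 6 := by
  nlinarith [mul_nonneg hp (sub_nonneg.2 ha),
    mul_nonneg (sub_nonneg.2 hq) (by linarith : (0 : ℝ) ≤ 7 / 6 - a)]

lemma add_lt_four_thirds {a b : ℝ} (ha : 5 / 12 < a) (hb : 5 / 12 < b)
    (hab : a * b < 55 / 144) : a + b < 4 / 3 := by
  nlinarith [mul_pos (sub_pos.2 ha) (sub_pos.2 hb)]

lemma two_thirds_le_add {p q a b : ℝ} (hpq : p + q ≤ 1) (hab : a + b ≤ 4 / 3) :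
    2 / 3 ≤ (p + (1 - p - q) * (1 - a) - (p + q) / 6)
      + (q + (1 - q - p) * (1 - b) - (q + p) / 6) := by
  nlinarith [mul_nonneg (sub_nonneg.2 hpq) (sub_nonneg.2 hab)]

lemma third_le_max_of_mul_lt {p q a b : ℝ} (hp0 : 0 ≤ p) (hp : p ≤ 1 / 3)
    (hq0 : 0 ≤ q) (hq : q ≤ 1 / 3) (ha : 1 / 6 ≤ a) (hb : 1 / 6 ≤ b)
    (hab : a * b < 55 / 144) :
    1 / 3 ≤ max (p + (1 - p - q) * (1 - a) - (p + q) / 6)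
      (q + (1 - q - p) * (1 - b) - (q + p) / 6) := by
  rcases le_or_gt a (5 / 12) with ha' | ha'
  · exact le_max_of_le_left (third_le_of_le_five_twelfths hp0 hq ha ha')
  rcases le_or_gt b (5 / 12) with hb' | hb'
  · exact le_max_of_le_right (third_le_of_le_five_twelfths hq0 hp hb hb')
  by_contra! hlt
  rw [max_lt_iff] at hlt
  linarith [two_thirds_le_add (p := p) (q := q) (by linarith) (add_lt_four_thirds ha' hb' hab).le]

lemma exp_neg_one_le_exp_neg_half_sub_div {S₁ S₂ : ℝ} (hS₂ : S₂ ≤ 1 / 2) (hsum : S₁ + S₂ < 1) :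
    exp (-1) ≤ exp (-(1 / 2 - S₁) / (1 - S₁ - S₂)) := by
  rw [exp_le_exp, neg_div, neg_le_neg_iff, div_le_one (by linarith)]
  linarith

lemma exp_neg_half_sub_div_mul_exp {S₁ S₂ : ℝ} (hsum : S₁ + S₂ ≠ 1) :
    exp (-(1 / 2 - S₁) / (1 - S₁ - S₂)) * exp (-(1 / 2 - S₂) / (1 - S₂ - S₁)) = exp (-1) := by
  have hD : 1 - S₁ - S₂ ≠ 0 := fun h => hsum (by linarith)
  have hD' : 1 - S₂ - S₁ ≠ 0 := fun h => hsum (by linarith)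
  rw [← exp_add]
  congr 1
  field_simp
  ring

lemma one_sixth_lt_exp_neg_one : 1 / 6 < exp (-1) :=
  lt_trans (by norm_num) exp_neg_one_gt_d9

lemma exp_neg_one_lt_fifty_five_div : exp (-1) < 55 / 144 :=
  lt_trans exp_neg_one_lt_d9 (by norm_num)

theorem technical_max_ge_third_general
    (p₁ p₂ S₁ S₂ : ℝ)
    (hp₁0 : 0 ≤ p₁) (hp₁ : p₁ ≤ 1 / 3)
    (hp₂0 : 0 ≤ p₂) (hp₂ : p₂ ≤ 1 / 3)
    (hS₁ : S₁ ≤ 1 / 2)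
    (hS₂ : S₂ ≤ 1 / 2)
    (hsum : S₁ + S₂ < 1) :
    1 / 3 ≤ max
      (p₁ + (1 - p₁ - p₂) * (1 - Real.exp (-(1 / 2 - S₁) / (1 - S₁ - S₂)))
        - (p₁ + p₂) / 6)
      (p₂ + (1 - p₂ - p₁) * (1 - Real.exp (-(1 / 2 - S₂) / (1 - S₂ - S₁)))
        - (p₂ + p₁) / 6) := by
  have hsum' : S₂ + S₁ < 1 := by linarith
  refine third_le_max_of_mul_lt hp₁0 hp₁ hp₂0 hp₂
    (one_sixth_lt_exp_neg_one.trans_le (exp_neg_one_le_exp_neg_half_sub_div hS₂ hsum)).le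
    (one_sixth_lt_exp_neg_one.trans_le (exp_neg_one_le_exp_neg_half_sub_div hS₁ hsum')).le ?_
  rw [exp_neg_half_sub_div_mul_exp hsum.ne]
  exact exp_neg_one_lt_fifty_five_div

/-- The technical lemma on the function `h(p_A,p_B,S_A,S_B)` with `k = 6`:
one of the two symmetric values is at least `1/3`. -/
theorem technical_max_ge_third
    (p₁ p₂ S₁ S₂ : ℝ)
    (hp₁0 : 0 ≤ p₁) (hp₁ : p₁ ≤ 1 / 3)
    (hp₂0 : 0 ≤ p₂) (hp₂ : p₂ ≤ 1 / 3)
    (hS₁0 : 0 ≤ S₁) (hS₁ : S₁ ≤ 1 / 2)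
    (hS₂0 : 0 ≤ S₂) (hS₂ : S₂ ≤ 1 / 2)
    (hsum : S₁ + S₂ < 1) :
    1 / 3 ≤ max
      (p₁ + (1 - p₁ - p₂) * (1 - Real.exp (-(1 / 2 - S₁) / (1 - S₁ - S₂)))
        - (p₁ + p₂) / 6)
      (p₂ + (1 - p₂ - p₁) * (1 - Real.exp (-(1 / 2 - S₂) / (1 - S₂ - S₁)))
        - (p₂ + p₁) / 6) :=
  technical_max_ge_third_general p₁ p₂ S₁ S₂ hp₁0 hp₁ hp₂0 hp₂ hS₁ hS₂ hsum
end

section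
/- For every real y with 0 ≤ y ≤ 1/3, it holds that 1 − y/2 − y/6 − (1/2)·√( y² + 4e^{−1}(1 − y)² ) ≥ 1/3. -/
/-!
Since `e > 144/55`, the radicand is at most `y² + (55/36)(1 - y)²`, which is at most
`(4/3 · (1 - y))²` exactly when `|y| ≤ (1 - y)/2`, i.e. on `[-1, 1/3]`. The square root is then
at most `4/3 · (1 - y)`, and `1 - 2y/3 - 2/3 · (1 - y) = 1/3`. Both estimates are tight at `y = 1/3`.
-/

lemma exp_neg_one_le : Real.exp (-1) ≤ 55 / 144 := by
  rw [Real.exp_neg, inv_le_comm₀ (Real.exp_pos 1) (by norm_num)]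
  linarith [Real.exp_one_gt_d9]

lemma sqrt_sq_add_four_mul_sq_le {c y : ℝ} (hc : c ≤ 55 / 144) (hy₀ : -1 ≤ y) (hy₁ : y ≤ 1 / 3) :
    Real.sqrt (y ^ 2 + 4 * c * (1 - y) ^ 2) ≤ 4 / 3 * (1 - y) := by
  rw [Real.sqrt_le_left (by linarith)]
  have hc' : 4 * c * (1 - y) ^ 2 ≤ 55 / 36 * (1 - y) ^ 2 := by
    nlinarith [sq_nonneg (1 - y)]
  nlinarith [mul_nonneg (by linarith : (0 : ℝ) ≤ y + 1) (by linarith : (0 : ℝ) ≤ 1 - 3 * y)]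

/-- Lower bound for `a(y) = 1 - y/2 - y/6 - √(y² + 4e⁻¹(1-y)²)/2` on `[0, 1/3]`. -/
theorem a_ge_third
    (y : ℝ) (h0 : 0 ≤ y) (h1 : y ≤ 1 / 3) :
    1 / 3 ≤ 1 - y / 2 - y / 6
      - (1 / 2) * Real.sqrt (y ^ 2 + 4 * Real.exp (-1) * (1 - y) ^ 2) := by
  linarith [sqrt_sq_add_four_mul_sq_le exp_neg_one_le (by linarith) h1]
end

section
/- For every real capacity m > 0 there exist a finite ground set Ω with sizes s_i satisfying 0 ≤ s_i ≤ m/2 and a non-negative, monotone, submodular (in fact additive) set function f: 2^Ω → ℝ such that max{ f(S) : S ⊆ Ω, Σ_{i∈S} s_i ≤ m/2 } = (1/3)·max{ f(S) : S ⊆ Ω, Σ_{i∈S} s_i ≤ m }. (For instance, three elements each of size m/3 and unit value.) Hence the factor 1/3 in the reserved-capacity guarantee cannot be improved. -/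
/-! Three items of size `m/3` and value `1`: all three fit into capacity `m`, but only one fits
into `m/2`, since two already have size `2m/3 > m/2`. -/

theorem isGreatest_value_of_uniform_sizes {α : Type*} [Fintype α] {k : ℕ} {c B : ℝ}
    (hk : k ≤ Fintype.card α) (hfit : k * c ≤ B) (hmax : Fintype.card α ≤ k ∨ B < (k + 1) * c) :
    IsGreatest {v : ℝ | ∃ S : Finset α, ∑ _i ∈ S, c ≤ B ∧ v = ∑ _i ∈ S, (1 : ℝ)} k := by
  simp only [Finset.sum_const, nsmul_eq_mul, mul_one]
  constructor
  · obtain ⟨S, -, hS⟩ := Finset.exists_subset_card_eq (s := (Finset.univ : Finset α)) hk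
    exact ⟨S, by rwa [hS], by rw [hS]⟩
  · rintro v ⟨S, hS, rfl⟩
    rcases hmax with hn | hB
    · exact_mod_cast S.card_le_univ.trans hn
    · have hc : 0 ≤ c := by linarith
      have hlt : (S.card : ℝ) < k + 1 := lt_of_mul_lt_mul_right (hS.trans_lt hB) hc
      exact_mod_cast Nat.le_of_lt_succ (by exact_mod_cast hlt)

/-- Tightness of the factor `1/3`: for every capacity `m > 0` there is an
instance (with an additive, hence non-negative, monotone and submodular,
objective and sizes at most `m/2`) where the best solution of total size at
most `m/2` has exactly one third of the value of the best solution of total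
size at most `m`. -/
theorem reserved_capacity_third_tight
    (m : ℝ) (hm : 0 < m) :
    ∃ (n : ℕ) (s : Fin n → ℝ) (w : Fin n → ℝ) (f : Finset (Fin n) → ℝ),
      (∀ i, 0 ≤ s i ∧ s i ≤ m / 2) ∧
      (∀ i, 0 ≤ w i) ∧
      (∀ S : Finset (Fin n), f S = ∑ i ∈ S, w i) ∧
      (∀ S : Finset (Fin n), 0 ≤ f S) ∧
      (∀ S T : Finset (Fin n), S ⊆ T → f S ≤ f T) ∧
      (∀ S T : Finset (Fin n), f (S ∪ T) + f (S ∩ T) ≤ f S + f T) ∧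
      ∃ Ohalf Ofull : ℝ,
        IsGreatest { v : ℝ | ∃ S : Finset (Fin n),
          (∑ i ∈ S, s i) ≤ m / 2 ∧ v = f S } Ohalf ∧
        IsGreatest { v : ℝ | ∃ S : Finset (Fin n),
          (∑ i ∈ S, s i) ≤ m ∧ v = f S } Ofull ∧
        Ohalf = (1 / 3) * Ofull := by
  have hhalf := isGreatest_value_of_uniform_sizes (α := Fin 3) (k := 1) (c := m / 3) (B := m / 2)
    (by simp) (by linarith) (Or.inr (by linarith))
  have hfull := isGreatest_value_of_uniform_sizes (α := Fin 3) (k := 3) (c := m / 3) (B := m)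
    le_rfl (by linarith) (Or.inl le_rfl)
  refine ⟨3, fun _ => m / 3, fun _ => 1, fun S => ∑ _i ∈ S, (1 : ℝ),
    fun _ => ⟨by positivity, by linarith⟩, fun _ => zero_le_one, fun _ => rfl,
    fun _ => Finset.sum_nonneg fun _ _ => zero_le_one,
    fun _ _ hST => Finset.sum_le_sum_of_subset_of_nonneg hST fun _ _ _ => zero_le_one,
    fun S T => (Finset.sum_union_inter (s₁ := S) (s₂ := T)).le,
    1, 3, by exact_mod_cast hhalf, by exact_mod_cast hfull, by norm_num⟩
end

section
/- Let M ≥ 1 be an integer, let m* ≥ 1 be a real number, and let p_1, ..., p_M be non-negative real numbers. Define v = min over s ∈ {1,...,M} of ( Σ_{j=1}^{s−1} p_j + m*·p_s ). Then Σ_{j=1}^{M} p_j ≥ (1 − e^{−M/m*})·v. -/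
/-! Write `S s = p₁ + ⋯ + p_s`. Minimality of `v` at index `s + 1` says
`v ≤ S s + m*·(S (s+1) - S s)`, i.e. each step closes at least a `1/m*` fraction of the gap
`v - S s`. Hence `v - S M ≤ (1 - 1/m*)^M · v ≤ e^{-M/m*} · v`. -/

open Finset Real

lemma sub_le_one_sub_inv_mul_sub {m v a b : ℝ} (hm : 0 < m) (h : v ≤ a + m * (b - a)) :
    v - b ≤ (1 - m⁻¹) * (v - a) := by
  have hclosed : (v - a) / m ≤ b - a := by rw [div_le_iff₀ hm]; linarith
  have hexpand : (1 - m⁻¹) * (v - a) = (v - a) - (v - a) / m := by ring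
  linarith

lemma sub_le_one_sub_inv_pow_mul_sub {m v : ℝ} (hm : 1 ≤ m) {S : ℕ → ℝ} {n : ℕ}
    (h : ∀ k < n, v ≤ S k + m * (S (k + 1) - S k)) :
    v - S n ≤ (1 - m⁻¹) ^ n * (v - S 0) := by
  have hq : 0 ≤ 1 - m⁻¹ := sub_nonneg.2 (inv_le_one_of_one_le₀ hm)
  induction n with
  | zero => simp
  | succ n ih =>
    calc v - S (n + 1) ≤ (1 - m⁻¹) * (v - S n) :=
          sub_le_one_sub_inv_mul_sub (by linarith) (h n n.lt_succ_self)
      _ ≤ (1 - m⁻¹) * ((1 - m⁻¹) ^ n * (v - S 0)) :=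
          mul_le_mul_of_nonneg_left (ih fun k hk => h k (hk.trans n.lt_succ_self)) hq
      _ = (1 - m⁻¹) ^ (n + 1) * (v - S 0) := by ring

lemma one_sub_inv_pow_le_exp {m : ℝ} (hm : 1 ≤ m) (n : ℕ) :
    (1 - m⁻¹) ^ n ≤ exp (-(n : ℝ) / m) :=
  calc (1 - m⁻¹) ^ n ≤ exp (-m⁻¹) ^ n :=
        pow_le_pow_left₀ (sub_nonneg.2 (inv_le_one_of_one_le₀ hm)) (one_sub_le_exp_neg _) n
    _ = exp (-(n : ℝ) / m) := by rw [← exp_nat_mul]; ring_nf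

theorem greedy_density_inequality_general
    (M : ℕ) (mstar : ℝ) (hmstar : 1 ≤ mstar)
    (p : ℕ → ℝ) (hp : ∀ j, 0 ≤ p j)
    (v : ℝ)
    (hv : IsLeast
      { w : ℝ | ∃ s : ℕ, 1 ≤ s ∧ s ≤ M ∧
          w = (∑ j ∈ Finset.Icc 1 (s - 1), p j) + mstar * p s } v) :
    (1 - Real.exp (-(M : ℝ) / mstar)) * v ≤ ∑ j ∈ Finset.Icc 1 M, p j := by
  have hv_nonneg : 0 ≤ v := by
    obtain ⟨s, -, -, rfl⟩ := hv.1
    exact add_nonneg (sum_nonneg fun j _ => hp j) (mul_nonneg (by linarith) (hp s))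
  have hgap : v - ∑ j ∈ Icc 1 M, p j ≤ (1 - mstar⁻¹) ^ M * v := by
    have hstep : ∀ k < M, v ≤ ∑ j ∈ Icc 1 k, p j
        + mstar * (∑ j ∈ Icc 1 (k + 1), p j - ∑ j ∈ Icc 1 k, p j) := fun k hk => by
      rw [sum_Icc_succ_top (Nat.le_add_left 1 k), add_sub_cancel_left]
      exact hv.2 ⟨k + 1, Nat.le_add_left 1 k, hk, rfl⟩
    simpa using sub_le_one_sub_inv_pow_mul_sub hmstar hstep
  have hdecay := mul_le_mul_of_nonneg_right (one_sub_inv_pow_le_exp hmstar M) hv_nonneg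
  linarith

/-- Sviridenko's greedy inequality: if `v` is the minimum over `s ∈ {1,…,M}`
of `Σ_{j=1}^{s-1} p_j + m*·p_s`, then `Σ_{j=1}^{M} p_j ≥ (1 - e^{-M/m*})·v`. -/
theorem greedy_density_inequality
    (M : ℕ) (hM : 1 ≤ M) (mstar : ℝ) (hmstar : 1 ≤ mstar)
    (p : ℕ → ℝ) (hp : ∀ j, 0 ≤ p j)
    (v : ℝ)
    (hv : IsLeast
      { w : ℝ | ∃ s : ℕ, 1 ≤ s ∧ s ≤ M ∧
          w = (∑ j ∈ Finset.Icc 1 (s - 1), p j) + mstar * p s } v) :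
    (1 - Real.exp (-(M : ℝ) / mstar)) * v ≤ ∑ j ∈ Finset.Icc 1 M, p j :=
  greedy_density_inequality_general M mstar hmstar p hp v hv
end
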